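/- arXiv:1911.11955 — 10 statements merged into one kernel-verified Lean document; each statement's English description precedes it below -/
import Mathlib

section
/- Let A be a real symmetric n×n matrix with smallest eigenvalue λ₁ < 0 and b ∈ ℝⁿ. Let S₀ be the set of minimizers of f(x) = xᵀAx − 2bᵀx over the unit ball B and S₁ the set of minimizers of f̃(x) = xᵀ(A − λ₁I)x − 2bᵀx + λ₁ over B. Then S₀ = S₁ ∩ {x : ‖x‖ = 1}. -/
/-!
Write `g(x) = f(x) + λ₁ (1 - ‖x‖²)` for the relaxed objective. Since `λ₁ < 0`, `g ≤ f` on the ball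
with equality exactly on the sphere. Conversely, for `y` in the ball, moving from `y` along a
`λ₁`-eigenvector `v` to the sphere changes the quadratic part of `f` by exactly `λ₁ (1 - ‖y‖²)`,
and choosing the direction so that `bᵀv` does not increase gives a point `z` of the sphere with
`f(z) ≤ g(y)`. Hence `min_B f = min_B g`, and the minimizers of `f` are the minimizers of `g` on
the sphere.
-/

open Matrix

theorem setOf_isMinOn_eq_inter_of_tight_relaxation {X β : Type*} [Preorder β]
    {f g : X → β} {K S : Set X} (hgf : ∀ x ∈ K, g x ≤ f x)
    (hS : ∀ x ∈ K, f x ≤ g x ↔ x ∈ S) (hdom : ∀ y ∈ K, ∃ z ∈ K, f z ≤ g y) :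
    {x | x ∈ K ∧ IsMinOn f K x} = {x | x ∈ K ∧ IsMinOn g K x} ∩ S := by
  ext x
  simp only [Set.mem_inter_iff, Set.mem_ofPred_eq, isMinOn_iff]
  constructor
  · rintro ⟨hxK, hmin⟩
    obtain ⟨z, hzK, hz⟩ := hdom x hxK
    refine ⟨⟨hxK, fun y hyK => ?_⟩, (hS x hxK).1 ((hmin z hzK).trans hz)⟩
    obtain ⟨w, hwK, hw⟩ := hdom y hyK
    exact ((hgf x hxK).trans (hmin w hwK)).trans hw
  · rintro ⟨⟨hxK, hmin⟩, hxS⟩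
    exact ⟨hxK, fun y hyK =>
      (((hS x hxK).2 hxS).trans (hmin y hyK)).trans (hgf y hyK)⟩

theorem exists_nonneg_norm_add_smul_eq {E : Type*} [NormedAddCommGroup E] [NormedSpace ℝ E]
    {y v : E} {r : ℝ} (hy : ‖y‖ ≤ r) (hv : v ≠ 0) : ∃ t : ℝ, 0 ≤ t ∧ ‖y + t • v‖ = r := by
  have hv' : 0 < ‖v‖ := norm_pos_iff.2 hv
  set T := (r + ‖y‖) / ‖v‖
  have hT : 0 ≤ T := div_nonneg (by linarith [norm_nonneg y]) hv'.le
  have hfar : r ≤ ‖y + T • v‖ := by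
    have hTv : ‖T • v‖ = r + ‖y‖ := by
      rw [norm_smul, Real.norm_of_nonneg hT, div_mul_cancel₀ _ hv'.ne']
    have := norm_sub_le (y + T • v) y
    rw [add_sub_cancel_left, hTv] at this
    linarith
  have hcont : ContinuousOn (fun t : ℝ => ‖y + t • v‖) (Set.Icc 0 T) := by fun_prop
  obtain ⟨t, ht, hty⟩ := intermediate_value_Icc hT hcont ⟨by simpa using hy, hfar⟩
  exact ⟨t, ht.1, hty⟩

theorem exists_mul_nonneg_norm_add_smul_eq {E : Type*} [NormedAddCommGroup E] [NormedSpace ℝ E]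
    {y v : E} {r : ℝ} (hy : ‖y‖ ≤ r) (hv : v ≠ 0) (c : ℝ) :
    ∃ t : ℝ, 0 ≤ t * c ∧ ‖y + t • v‖ = r := by
  rcases le_total 0 c with hc | hc
  · obtain ⟨t, ht, hyt⟩ := exists_nonneg_norm_add_smul_eq hy hv
    exact ⟨t, mul_nonneg ht hc, hyt⟩
  · obtain ⟨t, ht, hyt⟩ := exists_nonneg_norm_add_smul_eq hy (neg_ne_zero.2 hv)
    exact ⟨-t, mul_nonneg_of_nonpos_of_nonpos (neg_nonpos.2 ht) hc, by rwa [neg_smul, ← smul_neg]⟩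

theorem Matrix.dotProduct_sub_smul_one_mulVec {m R : Type*} [Fintype m] [DecidableEq m]
    [CommRing R] (A : Matrix m m R) (c : R) (x : m → R) :
    x ⬝ᵥ ((A - c • 1) *ᵥ x) = x ⬝ᵥ (A *ᵥ x) - c * (x ⬝ᵥ x) := by
  rw [sub_mulVec, dotProduct_sub, smul_mulVec, one_mulVec, dotProduct_smul, smul_eq_mul]

theorem Matrix.IsSymm.dotProduct_mulVec_add_smul_of_mulVec_eq_smul {m R : Type*} [Fintype m]
    [CommRing R] {A : Matrix m m R} (hA : A.IsSymm) {v : m → R} {μ : R} (hv : A *ᵥ v = μ • v)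
    (y : m → R) (t : R) :
    (y + t • v) ⬝ᵥ (A *ᵥ (y + t • v))
      = y ⬝ᵥ (A *ᵥ y) + μ * ((y + t • v) ⬝ᵥ (y + t • v) - y ⬝ᵥ y) := by
  have hvy : v ⬝ᵥ (A *ᵥ y) = μ * (y ⬝ᵥ v) := by
    rw [dotProduct_mulVec, ← mulVec_transpose, hA.eq, hv, smul_dotProduct, smul_eq_mul,
      dotProduct_comm]
  simp only [mulVec_add, mulVec_smul, hv, add_dotProduct, dotProduct_add, smul_dotProduct,
    dotProduct_smul, smul_eq_mul, hvy, dotProduct_comm v y]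
  ring

theorem EuclideanSpace.dotProduct_self {n : Type*} [Fintype n] (x : EuclideanSpace ℝ n) :
    x ⬝ᵥ x = ‖x‖ ^ 2 := by
  rw [← real_inner_self_eq_norm_sq, EuclideanSpace.inner_eq_star_dotProduct, star_trivial]

theorem exists_norm_eq_one_le_relaxation {n : Type*} [Fintype n] [DecidableEq n]
    {A : Matrix n n ℝ} (hA : A.IsSymm) {v : n → ℝ} (hv0 : v ≠ 0) {μ : ℝ} (hv : A *ᵥ v = μ • v)
    (b : n → ℝ) {y : EuclideanSpace ℝ n} (hy : ‖y‖ ≤ 1) :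
    ∃ z : EuclideanSpace ℝ n, ‖z‖ = 1 ∧
      z ⬝ᵥ (A *ᵥ z) - 2 * (b ⬝ᵥ z) ≤ y ⬝ᵥ ((A - μ • 1) *ᵥ y) - 2 * (b ⬝ᵥ y) + μ := by
  obtain ⟨t, htb, hz⟩ := exists_mul_nonneg_norm_add_smul_eq hy
    (v := WithLp.toLp 2 v) (by simpa using hv0) (b ⬝ᵥ v)
  refine ⟨y + t • WithLp.toLp 2 v, hz, ?_⟩
  have hzz := EuclideanSpace.dotProduct_self (y + t • WithLp.toLp 2 v)
  simp only [WithLp.ofLp_add, WithLp.ofLp_smul, hz] at hzz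
  rw [WithLp.ofLp_add, WithLp.ofLp_smul, WithLp.ofLp_toLp,
    hA.dotProduct_mulVec_add_smul_of_mulVec_eq_smul hv, hzz, dotProduct_add, dotProduct_smul,
    smul_eq_mul, dotProduct_sub_smul_one_mulVec]
  linarith

theorem trs_solution_set_relation_general
    (n : ℕ) (A : Matrix (Fin n) (Fin n) ℝ) (b : Fin n → ℝ) (lam1 : ℝ)
    (hA : A.IsSymm)
    (hEig : ∃ v : Fin n → ℝ, v ≠ 0 ∧ A *ᵥ v = lam1 • v)
    (hlam : lam1 < 0) :
    {x : EuclideanSpace ℝ (Fin n) | ‖x‖ ≤ 1 ∧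
        ∀ y : EuclideanSpace ℝ (Fin n), ‖y‖ ≤ 1 →
          x ⬝ᵥ (A *ᵥ x) - 2 * (b ⬝ᵥ x) ≤ y ⬝ᵥ (A *ᵥ y) - 2 * (b ⬝ᵥ y)}
      = {x : EuclideanSpace ℝ (Fin n) | ‖x‖ ≤ 1 ∧
          ∀ y : EuclideanSpace ℝ (Fin n), ‖y‖ ≤ 1 →
            x ⬝ᵥ ((A - lam1 • (1 : Matrix (Fin n) (Fin n) ℝ)) *ᵥ x) - 2 * (b ⬝ᵥ x) + lam1
              ≤ y ⬝ᵥ ((A - lam1 • (1 : Matrix (Fin n) (Fin n) ℝ)) *ᵥ y) - 2 * (b ⬝ᵥ y) + lam1}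
        ∩ {x : EuclideanSpace ℝ (Fin n) | ‖x‖ = 1} := by
  obtain ⟨v, hv0, hv⟩ := hEig
  have hgap (x : EuclideanSpace ℝ (Fin n)) :
      x ⬝ᵥ ((A - lam1 • 1) *ᵥ x) - 2 * (b ⬝ᵥ x) + lam1
        = x ⬝ᵥ (A *ᵥ x) - 2 * (b ⬝ᵥ x) + lam1 * (1 - ‖x‖ ^ 2) := by
    rw [dotProduct_sub_smul_one_mulVec, EuclideanSpace.dotProduct_self]
    ring
  refine setOf_isMinOn_eq_inter_of_tight_relaxation (K := {x | ‖x‖ ≤ 1})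
    (f := fun x : EuclideanSpace ℝ (Fin n) => x ⬝ᵥ (A *ᵥ x) - 2 * (b ⬝ᵥ x))
    (g := fun x => x ⬝ᵥ ((A - lam1 • 1) *ᵥ x) - 2 * (b ⬝ᵥ x) + lam1)
    (fun x (hx : ‖x‖ ≤ 1) => ?_) (fun x (hx : ‖x‖ ≤ 1) => ?_) (fun y hy => ?_)
  · rw [hgap, add_le_iff_nonpos_right]
    exact mul_nonpos_of_nonpos_of_nonneg hlam.le (by nlinarith [norm_nonneg x])
  · rw [hgap, Set.mem_ofPred_eq, le_add_iff_nonneg_right]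
    refine ⟨fun h => ?_, fun h => by simp [h]⟩
    have := nonpos_of_mul_nonneg_right h hlam
    nlinarith [norm_nonneg x]
  · obtain ⟨z, hz, hzy⟩ := exists_norm_eq_one_le_relaxation hA hv0 hv b hy
    exact ⟨z, hz.le, hzy⟩

/-- With `λ₁ < 0` the smallest eigenvalue of symmetric `A`, the solution set
`S₀` of the TRS equals the intersection of the solution set `S₁` of its convex relaxation
with the unit sphere. -/
theorem trs_solution_set_relation
    (n : ℕ) (A : Matrix (Fin n) (Fin n) ℝ) (b : Fin n → ℝ) (lam1 : ℝ)
    (hA : A.IsSymm)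
    (hEig : ∃ v : Fin n → ℝ, v ≠ 0 ∧ A *ᵥ v = lam1 • v)
    (hLow : ∀ x : Fin n → ℝ, lam1 * (x ⬝ᵥ x) ≤ x ⬝ᵥ (A *ᵥ x))
    (hlam : lam1 < 0) :
    {x : EuclideanSpace ℝ (Fin n) | ‖x‖ ≤ 1 ∧
        ∀ y : EuclideanSpace ℝ (Fin n), ‖y‖ ≤ 1 →
          x ⬝ᵥ (A *ᵥ x) - 2 * (b ⬝ᵥ x) ≤ y ⬝ᵥ (A *ᵥ y) - 2 * (b ⬝ᵥ y)}
      = {x : EuclideanSpace ℝ (Fin n) | ‖x‖ ≤ 1 ∧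
          ∀ y : EuclideanSpace ℝ (Fin n), ‖y‖ ≤ 1 →
            x ⬝ᵥ ((A - lam1 • (1 : Matrix (Fin n) (Fin n) ℝ)) *ᵥ x) - 2 * (b ⬝ᵥ x) + lam1
              ≤ y ⬝ᵥ ((A - lam1 • (1 : Matrix (Fin n) (Fin n) ℝ)) *ᵥ y) - 2 * (b ⬝ᵥ y) + lam1}
        ∩ {x : EuclideanSpace ℝ (Fin n) | ‖x‖ = 1} :=
  trs_solution_set_relation_general n A b lam1 hA hEig hlam
end

section
/- A point x* ∈ ℝⁿ is a global minimizer of f(x) = xᵀAx − 2bᵀx over the closed unit ball if and only if there exists λ* ∈ ℝ such that: ‖x*‖ ≤ 1, (A + λ*I)x* = b, A + λ*I is positive semidefinite, λ* ≥ 0, and λ*(1 − ‖x*‖²) = 0. -/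
open Matrix

lemma symdot {n : ℕ} (M : Matrix (Fin n) (Fin n) ℝ) (hM : M.IsSymm) (x y : Fin n → ℝ) :
    x ⬝ᵥ (M *ᵥ y) = y ⬝ᵥ (M *ᵥ x) := by
  rw [Matrix.dotProduct_mulVec, ← Matrix.mulVec_transpose, hM.eq, dotProduct_comm]

lemma quad_expand {n : ℕ} (M : Matrix (Fin n) (Fin n) ℝ) (hM : M.IsSymm) (s t : ℝ)
    (u v : Fin n → ℝ) :
    (s•u + t•v) ⬝ᵥ (M *ᵥ (s•u + t•v))
      = s^2 * (u ⬝ᵥ (M *ᵥ u)) + 2*s*t*(u ⬝ᵥ (M *ᵥ v)) + t^2 * (v ⬝ᵥ (M *ᵥ v)) := by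
  simp [Matrix.mulVec_add, Matrix.mulVec_smul, dotProduct_add, add_dotProduct,
    smul_dotProduct, dotProduct_smul, smul_eq_mul, symdot M hM v u]
  ring

lemma le_zero_of_small (c K ε₀ : ℝ) (hε₀ : 0 < ε₀)
    (h : ∀ ε : ℝ, 0 < ε → ε ≤ ε₀ → c ≤ ε * K) : c ≤ 0 := by
  by_contra hc
  push_neg at hc
  rcases le_or_gt K 0 with hK | hK
  · have := h ε₀ hε₀ le_rfl
    nlinarith
  · have hε : 0 < min ε₀ (c/(2*K)) := lt_min hε₀ (by positivity)
    have h1 := h _ hε (min_le_left _ _)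
    have h2 : min ε₀ (c/(2*K)) ≤ c/(2*K) := min_le_right _ _
    have h3 : min ε₀ (c/(2*K)) * K ≤ (c/(2*K)) * K := by nlinarith
    have h4 : (c/(2*K)) * K = c/2 := by field_simp
    nlinarith

lemma key {n : ℕ} (A : Matrix (Fin n) (Fin n) ℝ) (hA : A.IsSymm) (b : Fin n → ℝ) (lam : ℝ)
    (x d : Fin n → ℝ) :
    (x+d) ⬝ᵥ (A *ᵥ (x+d)) - 2*(b ⬝ᵥ (x+d)) - (x ⬝ᵥ (A *ᵥ x) - 2*(b ⬝ᵥ x))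
      = d ⬝ᵥ ((A + lam • (1:Matrix (Fin n) (Fin n) ℝ)) *ᵥ d)
        + 2*(((A + lam • (1:Matrix (Fin n) (Fin n) ℝ)) *ᵥ x - b) ⬝ᵥ d)
        - lam*(d ⬝ᵥ d + 2*(x ⬝ᵥ d)) := by
  have h1 : x ⬝ᵥ (A *ᵥ d) = d ⬝ᵥ (A *ᵥ x) := symdot A hA x d
  simp [Matrix.mulVec_add, Matrix.add_mulVec, Matrix.smul_mulVec, Matrix.one_mulVec,
    dotProduct_add, add_dotProduct, sub_dotProduct, smul_dotProduct, dotProduct_smul, h1,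
    dotProduct_comm b d, dotProduct_comm d x, dotProduct_comm (A *ᵥ x) d]
  ring

lemma normle {n : ℕ} (x : EuclideanSpace ℝ (Fin n)) : ‖x‖ ≤ 1 ↔ x ⬝ᵥ x ≤ 1 := by
  have h2 : ‖x‖^2 = x ⬝ᵥ x := by
    rw [EuclideanSpace.norm_eq, Real.sq_sqrt (by positivity)]; simp only [Real.norm_eq_abs, sq_abs, dotProduct, sq, abs_mul_abs_self]
  rw [← h2]
  constructor
  · intro h; nlinarith [norm_nonneg x]
  · intro h; nlinarith [norm_nonneg x]

lemma normsq_dot {n : ℕ} (x : EuclideanSpace ℝ (Fin n)) : ‖x‖^2 = x ⬝ᵥ x := by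
  rw [EuclideanSpace.norm_eq, Real.sq_sqrt (by positivity)]; simp only [Real.norm_eq_abs, sq_abs, dotProduct, sq, abs_mul_abs_self]

lemma dot_self_nonneg {n : ℕ} (v : Fin n → ℝ) : 0 ≤ v ⬝ᵥ v :=
  Finset.sum_nonneg fun i _ => mul_self_nonneg _

lemma isHermOfSymm {n : ℕ} (M : Matrix (Fin n) (Fin n) ℝ) (h : M.IsSymm) : M.IsHermitian := by
  rwa [Matrix.IsHermitian, conjTranspose, Matrix.IsSymm] at *

set_option maxHeartbeats 2000000 in
/-- KKT conditions characterize global optimality for the TRS: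
`x*` minimizes `f(x) = xᵀAx − 2bᵀx` over the closed unit ball iff there is `λ* ∈ ℝ` with
`‖x*‖ ≤ 1`, `(A + λ*I)x* = b`, `A + λ*I ⪰ 0`, `λ* ≥ 0` and `λ*(1 − ‖x*‖²) = 0`. -/
theorem trs_kkt_characterization
    (n : ℕ) (A : Matrix (Fin n) (Fin n) ℝ) (b : Fin n → ℝ)
    (hA : A.IsSymm)
    (xs : EuclideanSpace ℝ (Fin n)) :
    (‖xs‖ ≤ 1 ∧ ∀ x : EuclideanSpace ℝ (Fin n), ‖x‖ ≤ 1 →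
        xs ⬝ᵥ (A *ᵥ xs) - 2 * (b ⬝ᵥ xs) ≤ x ⬝ᵥ (A *ᵥ x) - 2 * (b ⬝ᵥ x))
    ↔ ∃ lam : ℝ,
        ‖xs‖ ≤ 1 ∧
        (A + lam • (1 : Matrix (Fin n) (Fin n) ℝ)) *ᵥ xs = b ∧
        (A + lam • (1 : Matrix (Fin n) (Fin n) ℝ)).PosSemidef ∧
        0 ≤ lam ∧
        lam * (1 - ‖xs‖ ^ 2) = 0 := by
  let x0 : Fin n → ℝ := xs
  have hnormsq : ‖xs‖^2 = x0 ⬝ᵥ x0 := normsq_dot xs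
  have hexp : ∀ d : Fin n → ℝ, (x0 + d) ⬝ᵥ (x0 + d)
      = x0 ⬝ᵥ x0 + (d ⬝ᵥ d + 2*(x0 ⬝ᵥ d)) := by
    intro d
    simp [dotProduct_add, add_dotProduct, dotProduct_comm d x0]
    ring
  constructor
  · rintro ⟨hxsle, hmin⟩
    have hxs1 : x0 ⬝ᵥ x0 ≤ 1 := (normle xs).mp hxsle
    have hmin' : ∀ y : Fin n → ℝ, y ⬝ᵥ y ≤ 1 →
        x0 ⬝ᵥ (A *ᵥ x0) - 2*(b ⬝ᵥ x0) ≤ y ⬝ᵥ (A *ᵥ y) - 2*(b ⬝ᵥ y) := by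
      intro y hy
      have := hmin ((WithLp.equiv 2 (Fin n → ℝ)).symm y) ((normle _).mpr (by simpa using hy))
      exact this
    have hMain : ∀ lam : ℝ, ∀ d : Fin n → ℝ, (x0 + d) ⬝ᵥ (x0 + d) ≤ 1 →
        0 ≤ d ⬝ᵥ ((A + lam • (1:Matrix (Fin n) (Fin n) ℝ)) *ᵥ d)
            + 2*(((A + lam • (1:Matrix (Fin n) (Fin n) ℝ)) *ᵥ x0 - b) ⬝ᵥ d)
            - lam*(d ⬝ᵥ d + 2*(x0 ⬝ᵥ d)) := by
      intro lam d hd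
      have h := hmin' (x0 + d) hd
      have hk := key A hA b lam x0 d
      linarith
    rcases lt_or_eq_of_le hxs1 with hlt | hb
    · -- interior case
      have feas : ∀ v : Fin n → ℝ, ∀ t : ℝ, 0 < t →
          t ≤ min ((1 - x0 ⬝ᵥ x0)/(2*|x0 ⬝ᵥ v| + v ⬝ᵥ v + 1)) 1 →
          (x0 + t • v) ⬝ᵥ (x0 + t • v) ≤ 1 := by
        intro v t ht htle
        have hq : 0 ≤ v ⬝ᵥ v := dot_self_nonneg v
        have h1 : (x0 + t • v) ⬝ᵥ (x0 + t • v)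
            = x0 ⬝ᵥ x0 + (t^2*(v ⬝ᵥ v) + 2*t*(x0 ⬝ᵥ v)) := by
          rw [hexp]
          simp [smul_dotProduct, dotProduct_smul, smul_eq_mul]
          ring
        rw [h1]
        have ht1 : t ≤ 1 := le_trans htle (min_le_right _ _)
        have ht2 : t ≤ (1 - x0 ⬝ᵥ x0)/(2*|x0 ⬝ᵥ v| + v ⬝ᵥ v + 1) := le_trans htle (min_le_left _ _)
        have hden : 0 < 2*|x0 ⬝ᵥ v| + v ⬝ᵥ v + 1 := by positivity
        rw [le_div_iff₀ hden] at ht2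
        nlinarith [le_abs_self (x0 ⬝ᵥ v), neg_abs_le (x0 ⬝ᵥ v), abs_nonneg (x0 ⬝ᵥ v),
          mul_nonneg (mul_nonneg ht.le (sub_nonneg.mpr ht1)) hq]
      have base : ∀ w : Fin n → ℝ, ∀ t : ℝ, 0 < t →
          t ≤ min ((1 - x0 ⬝ᵥ x0)/(2*|x0 ⬝ᵥ w| + w ⬝ᵥ w + 1)) 1 →
          0 ≤ t^2*(w ⬝ᵥ (A *ᵥ w)) + 2*t*((A *ᵥ x0 - b) ⬝ᵥ w) := by
        intro w t ht htle
        have h := hMain 0 (t • w) (feas w t ht htle)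
        simp only [zero_smul, add_zero, zero_mul, sub_zero] at h
        simp only [Matrix.mulVec_smul, dotProduct_smul, smul_dotProduct, smul_eq_mul,
          sub_dotProduct, dotProduct_sub] at h ⊢
        ring_nf at h ⊢
        linarith
      have hτpos : ∀ v : Fin n → ℝ, 0 < min ((1 - x0 ⬝ᵥ x0)/(2*|x0 ⬝ᵥ v| + v ⬝ᵥ v + 1)) 1 := by
        intro v
        have hden : 0 < 2*|x0 ⬝ᵥ v| + v ⬝ᵥ v + 1 := by
          have := dot_self_nonneg v; positivity
        exact lt_min (div_pos (by linarith) hden) one_pos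
      have hQL : ∀ v : Fin n → ℝ, (A *ᵥ x0 - b) ⬝ᵥ v = 0 ∧ 0 ≤ v ⬝ᵥ (A *ᵥ v) := by
        intro v
        set τ := min ((1 - x0 ⬝ᵥ x0)/(2*|x0 ⬝ᵥ v| + v ⬝ᵥ v + 1)) 1 with hτdef
        have hτ := hτpos v
        have hL : (A *ᵥ x0 - b) ⬝ᵥ v = 0 := by
          have hstep : ∀ t : ℝ, 0 < t → t ≤ τ → |2*((A *ᵥ x0 - b) ⬝ᵥ v)| ≤ t * |v ⬝ᵥ (A *ᵥ v)| := by
            intro t ht htle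
            have h1 := base v t ht htle
            have hmineq : min ((1 - x0 ⬝ᵥ x0)/(2*|x0 ⬝ᵥ (-v)| + (-v) ⬝ᵥ (-v) + 1)) 1 = τ := by
              rw [hτdef]
              simp [dotProduct_neg, neg_dotProduct, abs_neg]
            have h2 : t ≤ min ((1 - x0 ⬝ᵥ x0)/(2*|x0 ⬝ᵥ (-v)| + (-v) ⬝ᵥ (-v) + 1)) 1 := by
              rw [hmineq]; exact htle
            have h3 := base (-v) t ht h2
            simp only [dotProduct_neg, neg_dotProduct, mulVec_neg, neg_neg, mul_neg] at h3
            rw [abs_le]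
            constructor
            · nlinarith [le_abs_self (v ⬝ᵥ (A *ᵥ v)), neg_abs_le (v ⬝ᵥ (A *ᵥ v)), ht, sq_nonneg t]
            · nlinarith [le_abs_self (v ⬝ᵥ (A *ᵥ v)), neg_abs_le (v ⬝ᵥ (A *ᵥ v)), ht, sq_nonneg t]
          have := le_zero_of_small _ _ τ hτ hstep
          have habs := abs_nonneg (2*((A *ᵥ x0 - b) ⬝ᵥ v))
          have : |2*((A *ᵥ x0 - b) ⬝ᵥ v)| = 0 := le_antisymm this habs
          have := abs_eq_zero.mp this
          linarith
        refine ⟨hL, ?_⟩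
        have h1 := base v τ hτ le_rfl
        rw [hL] at h1
        nlinarith [mul_pos hτ hτ]
      have hg : A *ᵥ x0 - b = 0 := by
        have := (hQL (A *ᵥ x0 - b)).1
        rwa [dotProduct_self_eq_zero] at this
      have hgb : A *ᵥ x0 = b := by
        have := sub_eq_zero.mp hg
        exact this
      refine ⟨0, hxsle, ?_, ?_, le_rfl, by simp⟩
      · show (A + (0:ℝ) • (1 : Matrix (Fin n) (Fin n) ℝ)) *ᵥ x0 = b
        simpa using hgb
      · have hA0 : A + (0:ℝ) • (1 : Matrix (Fin n) (Fin n) ℝ) = A := by simp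
        rw [hA0]
        refine PosSemidef.of_dotProduct_mulVec_nonneg (isHermOfSymm A hA) fun x => ?_
        simpa using (hQL x).2
    · -- boundary case
      have hiface : ∀ l : ℝ, (A + l • (1:Matrix (Fin n) (Fin n) ℝ)) *ᵥ xs
          = (A + l • (1:Matrix (Fin n) (Fin n) ℝ)) *ᵥ x0 := fun _ => rfl
      set lam := b ⬝ᵥ x0 - x0 ⬝ᵥ (A *ᵥ x0) with hlamdef
      clear_value lam
      set r := A *ᵥ x0 - b + lam • x0 with hrdef
      clear_value r
      have hMsym : (A + lam • (1:Matrix (Fin n) (Fin n) ℝ)).IsSymm := by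
        show (A + lam • (1:Matrix (Fin n) (Fin n) ℝ))ᵀ = _
        rw [Matrix.transpose_add, Matrix.transpose_smul, Matrix.transpose_one, hA.eq]
      have hMr : (A + lam • (1:Matrix (Fin n) (Fin n) ℝ)) *ᵥ x0 - b = r := by
        rw [hrdef]
        simp [Matrix.add_mulVec, Matrix.smul_mulVec, Matrix.one_mulVec]
        abel
      have hrxs : r ⬝ᵥ x0 = 0 := by
        rw [hrdef, hlamdef]
        simp only [sub_dotProduct, add_dotProduct, smul_dotProduct, smul_eq_mul, hb,
          dotProduct_comm (A *ᵥ x0) x0]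
        ring
      set α := x0 ⬝ᵥ ((A + lam • (1:Matrix (Fin n) (Fin n) ℝ)) *ᵥ x0) with hαdef
      clear_value α
      have hlam0 : 0 ≤ lam := by
        have hstep : ∀ ε : ℝ, 0 < ε → ε ≤ 1 → -lam ≤ ε * |α| := by
          intro ε hε hε1
          have hfeas : (x0 + (-ε) • x0) ⬝ᵥ (x0 + (-ε) • x0) ≤ 1 := by
            rw [hexp]
            simp only [smul_dotProduct, dotProduct_smul, smul_eq_mul, hb]
            nlinarith
          have h := hMain lam ((-ε) • x0) hfeas
          rw [hMr] at h
          simp only [Matrix.mulVec_smul, dotProduct_smul, smul_dotProduct, smul_eq_mul, hb,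
            hrxs, mul_zero, mul_one, ← hαdef] at h
          have h' : 0 ≤ ε^2*α - lam*ε^2 + 2*lam*ε := by nlinarith [h]
          rcases le_or_gt 0 lam with hl | hl
          · have : 0 ≤ ε * |α| := by positivity
            linarith
          · have e2 : ε^2*α ≤ ε^2*|α| := by nlinarith [le_abs_self α, sq_nonneg ε]
            have e3 : (-lam)*ε^2 ≤ (-lam)*ε :=
              mul_le_mul_of_nonneg_left (by nlinarith : ε^2 ≤ ε) (by linarith : (0:ℝ) ≤ -lam)
            have e4 : ε*(-lam) ≤ ε*(ε*|α|) := by nlinarith [h', e2, e3]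
            exact (mul_le_mul_iff_right₀ hε).mp e4
        have := le_zero_of_small _ _ 1 one_pos hstep
        linarith
      have hu : ∀ u : Fin n → ℝ, u ⬝ᵥ u = 1 → x0 ⬝ᵥ u = 0 → 0 ≤ r ⬝ᵥ u := by
        intro u huu hxu
        set Quu := u ⬝ᵥ ((A + lam • (1:Matrix (Fin n) (Fin n) ℝ)) *ᵥ u) with hQuudef
        clear_value Quu
        set Qux := u ⬝ᵥ ((A + lam • (1:Matrix (Fin n) (Fin n) ℝ)) *ᵥ x0) with hQuxdef
        clear_value Qux
        have hstep : ∀ s : ℝ, 0 < s → s ≤ 1 →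
            -(2*(r ⬝ᵥ u)) ≤ s * (|Quu| + 2*|Qux| + |α|) := by
          intro s hs hs1
          have hs2 : s^2 ≤ 1 := by nlinarith
          set σ := Real.sqrt (1 - s^2) with hσdef
          have hσ0 : 0 ≤ σ := Real.sqrt_nonneg _
          have hσsq : σ^2 = 1 - s^2 := Real.sq_sqrt (by linarith)
          clear_value σ
          have hσ1 : σ ≤ 1 := by nlinarith
          have h1σ : 1 - σ ≤ s^2 := by nlinarith
          have hxd : x0 + (s • u + (σ-1) • x0) = s • u + σ • x0 := by
            funext i
            simp only [Pi.add_apply, Pi.smul_apply, smul_eq_mul]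
            ring
          have hy1 : (x0 + (s • u + (σ-1) • x0)) ⬝ᵥ (x0 + (s • u + (σ-1) • x0)) = 1 := by
            rw [hxd]
            simp only [dotProduct_add, add_dotProduct, smul_dotProduct, dotProduct_smul,
              smul_eq_mul, hb, huu, hxu, dotProduct_comm u x0]
            linear_combination hσsq
          have e1 : (s • u + (σ-1) • x0) ⬝ᵥ (s • u + (σ-1) • x0)
              + 2*(x0 ⬝ᵥ (s • u + (σ-1) • x0)) = 0 := by
            have h' := hexp (s • u + (σ-1) • x0)
            rw [hy1, hb] at h'
            linarith
          have h := hMain lam (s • u + (σ-1) • x0) (le_of_eq hy1)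
          rw [hMr, e1, mul_zero, sub_zero] at h
          have e2 : r ⬝ᵥ (s • u + (σ-1) • x0) = s * (r ⬝ᵥ u) := by
            simp [dotProduct_add, dotProduct_smul, smul_eq_mul, hrxs]
          have e3 := quad_expand (A + lam • (1:Matrix (Fin n) (Fin n) ℝ)) hMsym s (σ-1) u x0
          rw [e2, e3, ← hQuudef, ← hQuxdef, ← hαdef] at h
          have t1 : s^2*Quu ≤ s^2*|Quu| := by
            nlinarith [le_abs_self Quu, sq_nonneg s]
          have t2 : 2*s*(σ-1)*Qux ≤ 2*(s^2*|Qux|) := by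
            have u1 : (σ-1)*Qux ≤ (1-σ)*|Qux| := by
              nlinarith [neg_abs_le Qux, le_abs_self Qux, (show (0:ℝ) ≤ 1-σ by linarith)]
            have u2 : (1-σ)*|Qux| ≤ s^2*|Qux| := mul_le_mul_of_nonneg_right h1σ (abs_nonneg _)
            have u3 : 2*s*((σ-1)*Qux) ≤ 2*s*(s^2*|Qux|) :=
              mul_le_mul_of_nonneg_left (u1.trans u2) (by positivity)
            have u4 : s*(s^2*|Qux|) ≤ 1*(s^2*|Qux|) :=
              mul_le_mul_of_nonneg_right hs1 (by positivity)
            nlinarith [u3, u4]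
          have t3 : (σ-1)^2*α ≤ s^2*|α| := by
            nlinarith [le_abs_self α, abs_nonneg α, h1σ, hσ1, hσ0]
          have hbound : s * (-(2*(r ⬝ᵥ u))) ≤ s * (s * (|Quu| + 2*|Qux| + |α|)) := by
            nlinarith [t1, t2, t3, h]
          exact (mul_le_mul_iff_right₀ hs).mp hbound
        have h2 := le_zero_of_small _ _ 1 one_pos hstep
        linarith
      have hrzero : r = 0 := by
        by_contra hr
        have hrr : 0 < r ⬝ᵥ r :=
          lt_of_le_of_ne (dot_self_nonneg r) (fun h => hr (dotProduct_self_eq_zero.mp h.symm))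
        set ρ := Real.sqrt (r ⬝ᵥ r) with hρdef
        have hρ : 0 < ρ := Real.sqrt_pos.mpr hrr
        have hρsq : ρ^2 = r ⬝ᵥ r := Real.sq_sqrt hrr.le
        clear_value ρ
        have huu1 : ((ρ⁻¹ • r) ⬝ᵥ (ρ⁻¹ • r)) = 1 := by
          simp only [smul_dotProduct, dotProduct_smul, smul_eq_mul]
          rw [← hρsq]
          field_simp
        have hxu1 : x0 ⬝ᵥ (ρ⁻¹ • r) = 0 := by
          simp [dotProduct_smul, smul_eq_mul, dotProduct_comm x0 r, hrxs]
        have h1 := hu (ρ⁻¹ • r) huu1 hxu1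
        have h2 := hu (-(ρ⁻¹ • r)) (by simpa using huu1) (by simpa using hxu1)
        have h3 : r ⬝ᵥ (ρ⁻¹ • r) = ρ⁻¹ * (r ⬝ᵥ r) := by
          simp [dotProduct_smul, smul_eq_mul]
        have h4 : r ⬝ᵥ (-(ρ⁻¹ • r)) = -(ρ⁻¹ * (r ⬝ᵥ r)) := by
          simp [dotProduct_neg, dotProduct_smul, smul_eq_mul]
        rw [h3] at h1
        rw [h4] at h2
        nlinarith [inv_pos.mpr hρ, hrr]
      have hMb : (A + lam • (1:Matrix (Fin n) (Fin n) ℝ)) *ᵥ x0 = b := by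
        have h := hMr
        rw [hrzero] at h
        exact sub_eq_zero.mp h
      have hpos1 : ∀ v : Fin n → ℝ, x0 ⬝ᵥ v ≠ 0 → 0 ≤ v ⬝ᵥ ((A + lam • (1:Matrix (Fin n) (Fin n) ℝ)) *ᵥ v) := by
        intro v hc
        have hvv : 0 < v ⬝ᵥ v := by
          rcases lt_or_eq_of_le (dot_self_nonneg v) with h | h
          · exact h
          · exfalso; apply hc; rw [dotProduct_self_eq_zero.mp h.symm, dotProduct_zero]
        set t := -2*(x0 ⬝ᵥ v)/(v ⬝ᵥ v) with htdef
        have ht : t ≠ 0 := by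
          rw [htdef]
          exact div_ne_zero (by intro h'; apply hc; linarith) hvv.ne'
        have hcancel : t*(v ⬝ᵥ v) = -2*(x0 ⬝ᵥ v) := by
          rw [htdef]; field_simp
        clear_value t
        have hdd : (t • v) ⬝ᵥ (t • v) + 2*(x0 ⬝ᵥ (t • v)) = 0 := by
          simp only [smul_dotProduct, dotProduct_smul, smul_eq_mul]
          linear_combination t * hcancel
        have hfeas : (x0 + t • v) ⬝ᵥ (x0 + t • v) ≤ 1 := by
          rw [hexp, hdd, hb]
          norm_num
        have h := hMain lam (t • v) hfeas
        rw [hMb, hdd] at h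
        simp only [sub_self, zero_dotProduct, mul_zero, add_zero, sub_zero] at h
        have he : (t • v) ⬝ᵥ ((A + lam • (1:Matrix (Fin n) (Fin n) ℝ)) *ᵥ (t • v)) = t^2 * (v ⬝ᵥ ((A + lam • (1:Matrix (Fin n) (Fin n) ℝ)) *ᵥ v)) := by
          simp only [Matrix.mulVec_smul, smul_dotProduct, dotProduct_smul, smul_eq_mul]
          ring
        rw [he] at h
        have ht2 : 0 < t^2 := by positivity
        nlinarith [h, ht2]
      have hpsd2 : ∀ v : Fin n → ℝ, 0 ≤ v ⬝ᵥ ((A + lam • (1:Matrix (Fin n) (Fin n) ℝ)) *ᵥ v) := by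
        intro v
        by_cases hc : x0 ⬝ᵥ v = 0
        · set Qvv := v ⬝ᵥ ((A + lam • (1:Matrix (Fin n) (Fin n) ℝ)) *ᵥ v) with hQvvdef
          set Qvx := v ⬝ᵥ ((A + lam • (1:Matrix (Fin n) (Fin n) ℝ)) *ᵥ x0) with hQvxdef
          have hstep : ∀ ε : ℝ, 0 < ε → ε ≤ 1 → -Qvv ≤ ε * (2*|Qvx| + |α|) := by
            intro ε hε hε1
            have hxve : x0 ⬝ᵥ ((1:ℝ) • v + ε • x0) ≠ 0 := by
              simp only [dotProduct_add, dotProduct_smul, smul_eq_mul, hc, hb, mul_zero,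
                mul_one, zero_add]
              exact hε.ne'
            have h := hpos1 _ hxve
            rw [quad_expand (A + lam • (1:Matrix (Fin n) (Fin n) ℝ)) hMsym 1 ε v x0, ← hQvvdef, ← hQvxdef, ← hαdef] at h
            have w1 : ε*Qvx ≤ ε*|Qvx| := mul_le_mul_of_nonneg_left (le_abs_self Qvx) hε.le
            have w2 : ε^2*α ≤ ε^2*|α| := mul_le_mul_of_nonneg_left (le_abs_self α) (sq_nonneg ε)
            have w3 : ε^2*|α| ≤ ε*|α| :=
              mul_le_mul_of_nonneg_right (by nlinarith : ε^2 ≤ ε) (abs_nonneg α)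
            nlinarith [h, w1, w2, w3]
          have := le_zero_of_small _ _ 1 one_pos hstep
          linarith
        · exact hpos1 v hc
      refine ⟨lam, hxsle, ?_, PosSemidef.of_dotProduct_mulVec_nonneg (isHermOfSymm _ hMsym) fun x => by simpa using hpsd2 x, hlam0, ?_⟩
      · rw [hiface lam]
        exact hMb
      · rw [hnormsq, hb]
        ring
  · rintro ⟨lam, hxsle, heq, hpsd, hlam, hcomp⟩
    refine ⟨hxsle, ?_⟩
    intro x hx
    let y0 : Fin n → ℝ := x
    have hx1 : y0 ⬝ᵥ y0 ≤ 1 := (normle x).mp hx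
    have hxs1 : x0 ⬝ᵥ x0 ≤ 1 := (normle xs).mp hxsle
    have hcomp' : lam * (1 - x0 ⬝ᵥ x0) = 0 := by rw [← hnormsq]; exact hcomp
    have hsum : x0 + (y0 - x0) = y0 := by abel
    have hd := key A hA b lam x0 (y0 - x0)
    rw [hsum] at hd
    have h0 : ((A + lam • (1:Matrix (Fin n) (Fin n) ℝ)) *ᵥ x0 - b) = 0 := by
      have heq' : (A + lam • (1:Matrix (Fin n) (Fin n) ℝ)) *ᵥ x0 = b := heq
      rw [heq']; simp
    rw [h0, zero_dotProduct] at hd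
    have hquad : 0 ≤ (y0 - x0) ⬝ᵥ ((A + lam • (1:Matrix (Fin n) (Fin n) ℝ)) *ᵥ (y0 - x0)) := by
      simpa using hpsd.dotProduct_mulVec_nonneg (y0 - x0)
    have hdot : (y0 - x0) ⬝ᵥ (y0 - x0) + 2*(x0 ⬝ᵥ (y0 - x0)) = y0 ⬝ᵥ y0 - x0 ⬝ᵥ x0 := by
      simp [dotProduct_sub, sub_dotProduct, dotProduct_comm x0 y0]
      ring
    rw [hdot] at hd
    have hlx : 0 ≤ lam * (1 - y0 ⬝ᵥ y0) := mul_nonneg hlam (by linarith)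
    show x0 ⬝ᵥ (A *ᵥ x0) - 2 * (b ⬝ᵥ x0) ≤ y0 ⬝ᵥ (A *ᵥ y0) - 2 * (b ⬝ᵥ y0)
    nlinarith [hd, hquad, hlx, hcomp']
end

section
/- Let A be a real symmetric matrix with smallest eigenvalue λ₁ < 0, and suppose b ∉ Range(A − λ₁I). Then inf over ℝⁿ of f̃(x) = xᵀ(A − λ₁I)x − 2bᵀx + λ₁ is −∞. -/
open Matrix

/-!
For a symmetric matrix `M` the range is the orthogonal complement of the kernel, so
`b ∉ range M` yields a kernel vector `v` with `b ⬝ᵥ v ≠ 0`. Along the line `t • v` the quadratic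
term vanishes and `f̃` is affine in `t` with nonzero slope `-2 (b ⬝ᵥ v)`.
-/

theorem Matrix.IsSymm.exists_mulVec_eq_zero_dotProduct_ne_zero {ι : Type*} [Fintype ι]
    [DecidableEq ι] {M : Matrix ι ι ℝ} (hM : M.IsSymm) {b : ι → ℝ}
    (hb : ¬ ∃ y, M *ᵥ y = b) : ∃ v, M *ᵥ v = 0 ∧ b ⬝ᵥ v ≠ 0 := by
  by_contra! hker
  have hT : M.toEuclideanLin.IsSymmetric :=
    isSymmetric_toEuclideanLin_iff.mpr (isHermitian_iff_isSymm.mpr hM)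
  have hrange : LinearMap.range M.toEuclideanLin = (LinearMap.ker M.toEuclideanLin)ᗮ := by
    rw [← hT.orthogonal_range, Submodule.orthogonal_orthogonal]
  have hbmem : WithLp.toLp 2 b ∈ (LinearMap.ker M.toEuclideanLin)ᗮ := by
    intro v hv
    simpa [EuclideanSpace.inner_eq_star_dotProduct, dotProduct_comm] using
      hker v.ofLp (congrArg WithLp.ofLp hv)
  rw [← hrange] at hbmem
  obtain ⟨y, hy⟩ := hbmem
  exact hb ⟨y.ofLp, congrArg WithLp.ofLp hy⟩

theorem exists_quadratic_lt_of_mulVec_eq_zero {ι : Type*} [Fintype ι] {M : Matrix ι ι ℝ}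
    {b v : ι → ℝ} (hv : M *ᵥ v = 0) (hbv : b ⬝ᵥ v ≠ 0) (c K : ℝ) :
    ∃ x, x ⬝ᵥ (M *ᵥ x) - 2 * (b ⬝ᵥ x) + c < K := by
  refine ⟨((c - K + 1) / (2 * (b ⬝ᵥ v))) • v, ?_⟩
  rw [mulVec_smul, hv, smul_zero, dotProduct_zero, dotProduct_smul, smul_eq_mul]
  field_simp
  linarith

theorem trs_relaxation_unbounded_below_general
    (n : ℕ) (A : Matrix (Fin n) (Fin n) ℝ) (b : Fin n → ℝ) (lam1 : ℝ)
    (hA : A.IsSymm)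
    (hb : ¬ ∃ y : Fin n → ℝ, (A - lam1 • (1 : Matrix (Fin n) (Fin n) ℝ)) *ᵥ y = b) :
    ∀ M : ℝ, ∃ x : Fin n → ℝ,
      x ⬝ᵥ ((A - lam1 • (1 : Matrix (Fin n) (Fin n) ℝ)) *ᵥ x) - 2 * (b ⬝ᵥ x) + lam1 < M := by
  have hsymm : (A - lam1 • (1 : Matrix (Fin n) (Fin n) ℝ)).IsSymm :=
    hA.sub (isSymm_one.smul lam1)
  obtain ⟨v, hv, hbv⟩ := hsymm.exists_mulVec_eq_zero_dotProduct_ne_zero hb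
  exact exists_quadratic_lt_of_mulVec_eq_zero hv hbv lam1

/-- If `λ₁ < 0` is the smallest eigenvalue of symmetric `A` and
`b ∉ Range(A − λ₁I)`, then `f̃(x) = xᵀ(A − λ₁I)x − 2bᵀx + λ₁` is unbounded below. -/
theorem trs_relaxation_unbounded_below
    (n : ℕ) (A : Matrix (Fin n) (Fin n) ℝ) (b : Fin n → ℝ) (lam1 : ℝ)
    (hA : A.IsSymm)
    (hEig : ∃ v : Fin n → ℝ, v ≠ 0 ∧ A *ᵥ v = lam1 • v)
    (hLow : ∀ x : Fin n → ℝ, lam1 * (x ⬝ᵥ x) ≤ x ⬝ᵥ (A *ᵥ x))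
    (hlam : lam1 < 0)
    (hb : ¬ ∃ y : Fin n → ℝ, (A - lam1 • (1 : Matrix (Fin n) (Fin n) ℝ)) *ᵥ y = b) :
    ∀ M : ℝ, ∃ x : Fin n → ℝ,
      x ⬝ᵥ ((A - lam1 • (1 : Matrix (Fin n) (Fin n) ℝ)) *ᵥ x) - 2 * (b ⬝ᵥ x) + lam1 < M :=
  trs_relaxation_unbounded_below_general n A b lam1 hA hb
end

section
/- Let D be a diagonal n×n matrix with d_i = 0 for i ≤ K and d_i > 0 for i > K, and let s ∈ ℝⁿ with ‖s‖ = 1 and Σ_{i=1}^K s_i² > 0. Then there exists ε > 0 such that for all z with ‖z‖ ≤ ε, ‖Dz‖² − (⟨s,Dz⟩ + ⟨z,Dz⟩)² ≥ (1/2)·d_{K+1}·(Σ_{i=1}^K s_i²)·⟨z,Dz⟩. -/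
/-!
Write `A = ‖Dz‖²`, `α = ⟨s, Dz⟩`, `β = ⟨z, Dz⟩` and `σ = Σ_{i ≤ K} sᵢ²`. Since `Dz` lives off the
null space of `D`, where `s` only carries mass `1 - σ`, Cauchy–Schwarz gives `α² ≤ (1 - σ) A`;
it also gives `β² ≤ ‖z‖² A`. For `‖z‖ ≤ σ / 8` these combine to `(α + β)² ≤ (1 - σ / 2) A`, and
`d_{K+1} β ≤ A` because every nonzero `dᵢ` is at least `d_{K+1}`.
-/

open Finset

section

variable {ι : Type*} [Fintype ι]

theorem sq_sum_mul_le_of_eq_zero_on (N : Finset ι) (d s z : ι → ℝ) (hd : ∀ i ∈ N, d i = 0) :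
    (∑ i, s i * (d i * z i)) ^ 2 ≤ (∑ i, s i ^ 2 - ∑ i ∈ N, s i ^ 2) * ∑ i, (d i * z i) ^ 2 := by
  classical
  have hα : ∑ i, s i * (d i * z i) = ∑ i ∈ Nᶜ, s i * (d i * z i) := by
    rw [← sum_compl_add_sum N, sum_eq_zero (s := N) fun i hi => by simp [hd i hi], add_zero]
  have hs : ∑ i ∈ Nᶜ, s i ^ 2 = ∑ i, s i ^ 2 - ∑ i ∈ N, s i ^ 2 :=
    eq_sub_of_add_eq (sum_compl_add_sum N _)
  rw [hα, ← hs]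
  calc (∑ i ∈ Nᶜ, s i * (d i * z i)) ^ 2
      ≤ (∑ i ∈ Nᶜ, s i ^ 2) * ∑ i ∈ Nᶜ, (d i * z i) ^ 2 := sum_mul_sq_le_sq_mul_sq _ _ _
    _ ≤ (∑ i ∈ Nᶜ, s i ^ 2) * ∑ i, (d i * z i) ^ 2 := by
      gcongr
      exact subset_univ _

theorem sq_sum_mul_sq_le (d z : ι → ℝ) :
    (∑ i, d i * z i ^ 2) ^ 2 ≤ (∑ i, (d i * z i) ^ 2) * ∑ i, z i ^ 2 := by
  simpa only [mul_assoc, sq] using sum_mul_sq_le_sq_mul_sq univ (fun i => d i * z i) z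

theorem mul_sum_mul_sq_le_sum_sq {t : ℝ} (d z : ι → ℝ) (ht : 0 ≤ t)
    (hd : ∀ i, d i = 0 ∨ t ≤ d i) :
    t * ∑ i, d i * z i ^ 2 ≤ ∑ i, (d i * z i) ^ 2 := by
  rw [mul_sum]
  refine sum_le_sum fun i _ => ?_
  rcases hd i with h | h
  · simp [h]
  · nlinarith [mul_le_mul_of_nonneg_right h (mul_nonneg (ht.trans h) (sq_nonneg (z i)))]

theorem add_sq_le_of_sq_le {α β σ A : ℝ} (hσ : 0 < σ) (hσ1 : σ ≤ 1) (hA : 0 ≤ A)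
    (hα : α ^ 2 ≤ (1 - σ) * A) (hβ : β ^ 2 ≤ (σ / 8) ^ 2 * A) :
    (α + β) ^ 2 ≤ (1 - σ / 2) * A := by
  -- `(σ / 8 · α - β)² ≥ 0` gives `2αβ ≤ (σ / 4) A`, and `σ / 4 + σ² / 64 ≤ σ / 2`.
  nlinarith [sq_nonneg (σ / 8 * α - β), mul_nonneg hσ.le hA, mul_nonneg (mul_nonneg hσ.le hσ.le) hA]

end

/-- For a diagonal matrix `D = Diag(d)` with `dᵢ = 0` for `i < K` and
`0 < d_{K+1} ≤ … ≤ d_n`, and a unit vector `s` not orthogonal to `Null(D)`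
(`Σ_{i<K} sᵢ² > 0`), there is `ε > 0` such that for all `z` with `‖z‖ ≤ ε`,
`‖Dz‖² − (α + β)² ≥ (1/2)·d_{K+1}·(Σ_{i<K} sᵢ²)·β`, where `α = ⟨s, Dz⟩`, `β = ⟨z, Dz⟩`. -/
theorem diag_H_lower_bound
    (n K : ℕ) (hK : K < n) (d : Fin n → ℝ) (s : EuclideanSpace ℝ (Fin n))
    (hd0 : ∀ i : Fin n, (i : ℕ) < K → d i = 0)
    (hdpos : ∀ i : Fin n, K ≤ (i : ℕ) → 0 < d i)
    (hmono : ∀ i j : Fin n, i ≤ j → d i ≤ d j)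
    (hs : ‖s‖ = 1)
    (hsK : 0 < ∑ i ∈ univ.filter (fun i : Fin n => (i : ℕ) < K), (s i) ^ 2) :
    ∃ ε > 0, ∀ z : EuclideanSpace ℝ (Fin n), ‖z‖ ≤ ε →
      (1 / 2) * d ⟨K, hK⟩
          * (∑ i ∈ univ.filter (fun i : Fin n => (i : ℕ) < K), (s i) ^ 2)
          * (∑ i, d i * (z i) ^ 2)
        ≤ (∑ i, (d i * z i) ^ 2)
          - ((∑ i, s i * (d i * z i)) + (∑ i, d i * (z i) ^ 2)) ^ 2 := by
  set N := univ.filter fun i : Fin n => (i : ℕ) < K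
  set σ := ∑ i ∈ N, s i ^ 2
  have hs1 : ∑ i, s i ^ 2 = 1 := by rw [← EuclideanSpace.real_norm_sq_eq, hs, one_pow]
  have hσ1 : σ ≤ 1 := hs1 ▸ sum_le_sum_of_subset_of_nonneg (subset_univ N) fun i _ _ => sq_nonneg _
  refine ⟨σ / 8, by positivity, fun z hz => ?_⟩
  have hz2 : ∑ i, z i ^ 2 ≤ (σ / 8) ^ 2 := by
    rw [← EuclideanSpace.real_norm_sq_eq]
    exact pow_le_pow_left₀ (norm_nonneg z) hz 2
  have hA : 0 ≤ ∑ i, (d i * z i) ^ 2 := sum_nonneg fun i _ => sq_nonneg _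
  have hα := sq_sum_mul_le_of_eq_zero_on N d s z fun i hi => hd0 i (mem_filter.1 hi).2
  rw [hs1] at hα
  have hβ := (sq_sum_mul_sq_le d z).trans (mul_le_mul_of_nonneg_left hz2 hA)
  have hαβ := add_sq_le_of_sq_le hsK hσ1 hA hα (hβ.trans_eq (mul_comm _ _))
  have hdK := mul_sum_mul_sq_le_sum_sq d z (hdpos ⟨K, hK⟩ le_rfl).le fun i =>
    (lt_or_ge (i : ℕ) K).imp (hd0 i) fun h => hmono _ _ (Fin.le_def.2 h)
  calc 1 / 2 * d ⟨K, hK⟩ * σ * ∑ i, d i * z i ^ 2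
      = σ / 2 * (d ⟨K, hK⟩ * ∑ i, d i * z i ^ 2) := by ring
    _ ≤ σ / 2 * ∑ i, (d i * z i) ^ 2 := by gcongr
    _ ≤ _ := by linarith
end

section
/- Let S₁ ⊆ ℝⁿ be a nonempty closed convex set contained in the closed unit ball, and let S₀ = S₁ ∩ {x : ‖x‖ = 1} be nonempty. Suppose S₁ = {x̄ + v : ‖x̄ + v‖ ≤ 1, v ∈ V} where V is a linear subspace, x̄ ⟂ V, and ‖x̄‖ < 1. Let x ∈ ℝⁿ with Π_{S₁}(x) = x̄. Then Π_{S₀}(x) = S₀ and dist(x, S₀) = √(‖x − x̄‖² + 1 − ‖x̄‖²). -/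
open scoped RealInnerProductSpace Pointwise

/-! A point `x̄ + v` of `S₀` has `x̄ ± v ∈ S₁` (both have norm `1` by Pythagoras, as `x̄ ⟂ v`).
The variational inequality of the projection onto the convex set `S₁`, tested at these two
points, gives `⟪x - x̄, v⟫ = 0`, so by Pythagoras again
`‖x - (x̄ + v)‖² = ‖x - x̄‖² + ‖v‖² = ‖x - x̄‖² + 1 - ‖x̄‖²`, independently of the point of `S₀`. -/

theorem Metric.infDist_eq_of_forall_dist_eq {α : Type*} [PseudoMetricSpace α] {x : α} {s : Set α}
    {r : ℝ} (hs : s.Nonempty) (h : ∀ y ∈ s, dist x y = r) : Metric.infDist x s = r := by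
  obtain ⟨y₀, hy₀⟩ := hs
  refine le_antisymm ((Metric.infDist_le_dist_of_mem hy₀).trans (h y₀ hy₀).le) ?_
  exact (Metric.le_infDist ⟨y₀, hy₀⟩).2 fun y hy => (h y hy).ge

theorem convex_affine_inter_closedBall {E : Type*} [SeminormedAddCommGroup E] [NormedSpace ℝ E]
    (V : Submodule ℝ E) (p : E) (r : ℝ) :
    Convex ℝ {y | (∃ v ∈ V, y = p + v) ∧ ‖y‖ ≤ r} := by
  have haff : {y | ∃ v ∈ V, y = p + v} = p +ᵥ (V : Set E) := by
    ext y
    simp [Set.mem_vadd_set, eq_comm]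
  have hball : {y : E | ‖y‖ ≤ r} = Metric.closedBall 0 r := by
    ext y
    simp
  rw [Set.ofPred_and, haff, hball]
  exact (V.convex.vadd p).inter (convex_closedBall 0 r)

section InnerProductSpace

variable {F : Type*} [NormedAddCommGroup F] [InnerProductSpace ℝ F]

theorem real_inner_eq_zero_of_isMinOn_of_add_mem_of_sub_mem {K : Set F} (hK : Convex ℝ K)
    {u p v : F} (hp : p ∈ K) (hmin : IsMinOn (fun y => ‖u - y‖) K p) (hadd : p + v ∈ K)
    (hsub : p - v ∈ K) : ⟪u - p, v⟫ = 0 := by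
  have hvar := (norm_eq_iInf_iff_real_inner_le_zero hK hp).1 (hmin.iInf_eq hp).symm
  have h₁ := hvar _ hadd
  have h₂ := hvar _ hsub
  rw [add_sub_cancel_left] at h₁
  rw [sub_sub_cancel_left, inner_neg_right] at h₂
  linarith

end InnerProductSpace

theorem trs_projection_case1_general
    (n : ℕ) (V : Submodule ℝ (EuclideanSpace ℝ (Fin n)))
    (xb : EuclideanSpace ℝ (Fin n)) (hxb : xb ∈ Vᗮ)
    (S0 S1 : Set (EuclideanSpace ℝ (Fin n)))
    (hS1 : S1 = {y | (∃ v ∈ V, y = xb + v) ∧ ‖y‖ ≤ 1})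
    (hS0 : S0 = {y | (∃ v ∈ V, y = xb + v) ∧ ‖y‖ = 1})
    (hne : S0.Nonempty)
    (x : EuclideanSpace ℝ (Fin n))
    (hproj : ∀ y ∈ S1, ‖x - xb‖ ≤ ‖x - y‖) :
    (∀ y ∈ S0, ‖x - y‖ = Real.sqrt (‖x - xb‖ ^ 2 + 1 - ‖xb‖ ^ 2)) ∧
    Metric.infDist x S0 = Real.sqrt (‖x - xb‖ ^ 2 + 1 - ‖xb‖ ^ 2) := by
  have hdist : ∀ y ∈ S0, ‖x - y‖ = Real.sqrt (‖x - xb‖ ^ 2 + 1 - ‖xb‖ ^ 2) := by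
    subst hS0
    rintro _ ⟨⟨v, hv, rfl⟩, hnorm⟩
    have hxbv : ⟪xb, v⟫ = 0 := Submodule.inner_left_of_mem_orthogonal hv hxb
    have hpyth := norm_add_sq_real xb v
    rw [hxbv, hnorm] at hpyth
    have hxb_mem : xb ∈ S1 := hS1 ▸
      ⟨⟨0, V.zero_mem, (add_zero xb).symm⟩, by nlinarith [norm_nonneg xb, norm_nonneg v]⟩
    have hsub_mem : xb - v ∈ S1 := by
      rw [hS1]
      refine ⟨⟨-v, V.neg_mem hv, sub_eq_add_neg xb v⟩, ?_⟩
      rw [norm_sub_eq_norm_add (real_inner_comm xb v ▸ hxbv), hnorm]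
    have hxv : ⟪x - xb, v⟫ = 0 :=
      real_inner_eq_zero_of_isMinOn_of_add_mem_of_sub_mem
        (hS1 ▸ convex_affine_inter_closedBall V xb 1) hxb_mem (isMinOn_iff.2 hproj)
        (hS1 ▸ ⟨⟨v, hv, rfl⟩, hnorm.le⟩) hsub_mem
    rw [← sub_sub, ← Real.sqrt_sq (norm_nonneg (x - xb - v)), norm_sub_sq_real, hxv]
    congr 1
    linarith
  exact ⟨hdist, Metric.infDist_eq_of_forall_dist_eq hne fun y hy => by rw [dist_eq_norm, hdist y hy]⟩

/-- Hard case 2 (ii) geometry: if `Π_{S₁}(x) = x̄`, then every point of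
`S₀ = S₁ ∩ sphere` is a nearest point of `S₀` to `x`, and
`dist(x, S₀) = √(‖x − x̄‖² + 1 − ‖x̄‖²)`. -/
theorem trs_projection_case1
    (n : ℕ) (V : Submodule ℝ (EuclideanSpace ℝ (Fin n)))
    (xb : EuclideanSpace ℝ (Fin n)) (hxb : xb ∈ Vᗮ) (hxbn : ‖xb‖ < 1)
    (S0 S1 : Set (EuclideanSpace ℝ (Fin n)))
    (hS1 : S1 = {y | (∃ v ∈ V, y = xb + v) ∧ ‖y‖ ≤ 1})
    (hS0 : S0 = {y | (∃ v ∈ V, y = xb + v) ∧ ‖y‖ = 1})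
    (hne : S0.Nonempty)
    (x : EuclideanSpace ℝ (Fin n))
    (hproj : ∀ y ∈ S1, ‖x - xb‖ ≤ ‖x - y‖) :
    (∀ y ∈ S0, ‖x - y‖ = Real.sqrt (‖x - xb‖ ^ 2 + 1 - ‖xb‖ ^ 2)) ∧
    Metric.infDist x S0 = Real.sqrt (‖x - xb‖ ^ 2 + 1 - ‖xb‖ ^ 2) :=
  trs_projection_case1_general n V xb hxb S0 S1 hS1 hS0 hne x hproj
end

section
/- Let V be a nonzero linear subspace of ℝⁿ, x̄ ∈ V^⟂ with ‖x̄‖ < 1, S₀ = {x̄ + v : v ∈ V, ‖x̄ + v‖ = 1}, and S₁ = {x̄ + v : v ∈ V, ‖x̄ + v‖ ≤ 1}. Then every element y of S₀ satisfies ‖y − x̄‖ = √(1 − ‖x̄‖²), and with γ defined by sin γ = (1 − ‖x̄‖)/√((1 − ‖x̄‖)² + 1 − ‖x̄‖²) ∈ (0,1), the inequality dist(x, S₁) + √(1 − ‖x‖²) ≥ dist(x, S₀)·sin γ holds for all x with ‖x‖ ≤ 1. -/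
/-!
Let `P` be the orthogonal projection onto `V`, `t = ‖x̄‖` and `r = √(1 - t²)`: then `S₀` is the
sphere of radius `r` about `x̄` in the affine space `x̄ + V`, and `sin² γ = (1 - t) / 2`.
As `S₁ ⊆ x̄ + V`, `dist(x, S₁) ≥ d := ‖x - P x - x̄‖`, while the point of `S₀` in the direction
of `P x` lies at distance `√(d² + (‖P x‖ - r)²)` from `x`. With `a = ‖x - P x‖` (so that
`|a - t| ≤ d`), `s = ‖P x‖` and `c = √(1 - ‖x‖²) = √(1 - a² - s²)`, the claim becomes
`(1 - t) (d² + (s - r)²) ≤ 2 (d + c)²`, which follows from the inequality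
`(1 - t) (s - r)² ≤ (1 + t) (a - t)² + 2 c²` on the disk `a² + s² ≤ 1`.
-/

section

variable {t r : ℝ}

lemma hardCase_ineq_on_circle (ht0 : 0 ≤ t) (ht1 : t ≤ 1) (hr0 : 0 ≤ r) (hr : t ^ 2 + r ^ 2 = 1)
    {a m : ℝ} (hm0 : 0 ≤ m) (hm : a ^ 2 + m ^ 2 = 1) :
    (1 - t) * (m - r) ^ 2 ≤ (1 + t) * (a - t) ^ 2 := by
  have ha1 : a ≤ 1 := by nlinarith
  suffices (1 - a) * (1 + a - t - t ^ 2) ≤ m * r * (1 - t) by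
    linear_combination 2 * this + (1 - t) * hr + (1 - t) * hm
  have hrhs : 0 ≤ m * r * (1 - t) := by have := sub_nonneg.2 ht1; positivity
  rcases le_or_gt (1 + a - t - t ^ 2) 0 with hneg | hpos
  · nlinarith [mul_nonneg (sub_nonneg.2 ha1) (neg_nonneg.2 hneg)]
  · refine (sq_le_sq₀ (mul_nonneg (by linarith) hpos.le) hrhs).1 ?_
    have hpos' : 0 ≤ 1 + a - 2 * t ^ 2 := by nlinarith
    have hdiff : (m * r * (1 - t)) ^ 2 - ((1 - a) * (1 + a - t - t ^ 2)) ^ 2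
        = (1 - a) * (a - t) ^ 2 * (1 + a - 2 * t ^ 2) := by
      rw [mul_pow, mul_pow, show m ^ 2 = 1 - a ^ 2 by linarith, show r ^ 2 = 1 - t ^ 2 by linarith]
      ring
    nlinarith [mul_nonneg (mul_nonneg (sub_nonneg.2 ha1) (sq_nonneg (a - t))) hpos']

lemma hardCase_ineq_on_disk (ht0 : 0 ≤ t) (ht1 : t ≤ 1) (hr0 : 0 ≤ r) (hr : t ^ 2 + r ^ 2 = 1)
    {a s : ℝ} (hs0 : 0 ≤ s) (has : a ^ 2 + s ^ 2 ≤ 1) :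
    (1 - t) * (s - r) ^ 2 ≤ (1 + t) * (a - t) ^ 2 + 2 * (1 - a ^ 2 - s ^ 2) := by
  obtain ⟨ha0, ha1⟩ : -1 ≤ a ∧ a ≤ 1 :=
    abs_le.1 (abs_le_one_iff_mul_self_le_one.2 (by nlinarith [sq_nonneg s]))
  obtain ⟨m, hm0, hm⟩ : ∃ m : ℝ, 0 ≤ m ∧ a ^ 2 + m ^ 2 = 1 :=
    ⟨√(1 - a ^ 2), Real.sqrt_nonneg _, by rw [Real.sq_sqrt (by nlinarith [sq_nonneg s])]; ring⟩
  have hsm : s ≤ m := (sq_le_sq₀ hs0 hm0).1 (by linarith)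
  -- the gap is a concave quadratic in `σ`, nonnegative at the endpoints `σ = 0` and `σ = m`
  let gap : ℝ → ℝ := fun σ ↦ (1 + t) * (a - t) ^ 2 + 2 * (1 - a ^ 2 - σ ^ 2) - (1 - t) * (σ - r) ^ 2
  have hgap0 : 0 ≤ gap 0 := by
    have hgap0_eq : gap 0 = (1 - a) * ((1 - t) * (a + 1) + 2 * t + 2 * t ^ 2) := by
      simp only [gap]; linear_combination (t - 1) * hr
    rw [hgap0_eq]
    have := sub_nonneg.2 ht1; have : 0 ≤ a + 1 := by linarith
    have := sub_nonneg.2 ha1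
    positivity
  have hgapm : 0 ≤ gap m := by
    have := hardCase_ineq_on_circle ht0 ht1 hr0 hr hm0 hm
    simp only [gap]; linear_combination this + 2 * hm
  suffices 0 ≤ gap s by simp only [gap] at this; linarith
  rcases hm0.eq_or_lt with hm0 | hm0
  · obtain rfl : s = 0 := le_antisymm (hm0 ▸ hsm) hs0
    exact hgap0
  · have hinterp : m * gap s = (m - s) * gap 0 + s * gap m + (3 - t) * s * (m - s) * m := by
      simp only [gap]; ring
    refine nonneg_of_mul_nonneg_right ?_ hm0
    rw [hinterp]
    have := sub_nonneg.2 hsm; have : 0 ≤ 3 - t := by linarith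
    positivity

lemma hardCase_dist_sq_ineq (ht0 : 0 ≤ t) (ht1 : t ≤ 1) (hr0 : 0 ≤ r) (hr : t ^ 2 + r ^ 2 = 1)
    {a s c d : ℝ} (hs0 : 0 ≤ s) (hc0 : 0 ≤ c) (hc : a ^ 2 + s ^ 2 + c ^ 2 = 1)
    (hd : |a - t| ≤ d) :
    (1 - t) / 2 * (d ^ 2 + (s - r) ^ 2) ≤ (d + c) ^ 2 := by
  have hdisk := hardCase_ineq_on_disk ht0 ht1 hr0 hr hs0 (by nlinarith : a ^ 2 + s ^ 2 ≤ 1)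
  have hd2 : (a - t) ^ 2 ≤ d ^ 2 := sq_le_sq' (abs_le.1 hd).1 (abs_le.1 hd).2
  have hdc : 0 ≤ d * c := mul_nonneg ((abs_nonneg _).trans hd) hc0
  nlinarith

end

lemma sub_div_sqrt_eq_sqrt_half {t : ℝ} (ht : t < 1) :
    (1 - t) / √((1 - t) ^ 2 + 1 - t ^ 2) = √((1 - t) / 2) := by
  have h : 0 < 1 - t := sub_pos.2 ht
  rw [show (1 - t) ^ 2 + 1 - t ^ 2 = 2 * (1 - t) by ring, eq_comm,
    Real.sqrt_eq_iff_mul_self_eq (by positivity) (by positivity), div_mul_div_comm,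
    Real.mul_self_sqrt (by positivity)]
  field_simp

variable {E : Type*} [NormedAddCommGroup E] [InnerProductSpace ℝ E] (K : Submodule ℝ E)

namespace Submodule

lemma norm_add_sq_of_mem_orthogonal {u v : E} (hu : u ∈ Kᗮ) (hv : v ∈ K) :
    ‖u + v‖ ^ 2 = ‖u‖ ^ 2 + ‖v‖ ^ 2 := by
  simp only [sq]
  exact norm_add_sq_eq_norm_sq_add_norm_sq_real (K.inner_left_of_mem_orthogonal hv hu)

lemma exists_mem_norm_eq_and_norm_sub_eq (hK : K ≠ ⊥) {w : E} (hw : w ∈ K) {r : ℝ}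
    (hr : 0 ≤ r) : ∃ v ∈ K, ‖v‖ = r ∧ ‖w - v‖ = |‖w‖ - r| := by
  obtain ⟨e, heK, he, hwe⟩ : ∃ e ∈ K, ‖e‖ = 1 ∧ ‖w‖ • e = w := by
    by_cases hw0 : w = 0
    · obtain ⟨v, hvK, hv0⟩ := K.ne_bot_iff.1 hK
      exact ⟨‖v‖⁻¹ • v, K.smul_mem _ hvK, norm_smul_inv_norm hv0, by simp [hw0]⟩
    · exact ⟨‖w‖⁻¹ • w, K.smul_mem _ hw, norm_smul_inv_norm hw0, by simp [smul_smul, hw0]⟩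
  refine ⟨r • e, K.smul_mem _ heK, by simp [norm_smul, he, abs_of_nonneg hr], ?_⟩
  rw [← hwe, ← sub_smul, norm_smul, he, mul_one, Real.norm_eq_abs, hwe]

variable [K.HasOrthogonalProjection] {xb : E}

lemma norm_sub_add_sq (hxb : xb ∈ Kᗮ) {v : E} (hv : v ∈ K) (x : E) :
    ‖x - (xb + v)‖ ^ 2 = ‖x - K.starProjection x - xb‖ ^ 2 + ‖K.starProjection x - v‖ ^ 2 := by
  rw [show x - (xb + v) = (x - K.starProjection x - xb) + (K.starProjection x - v) by abel]
  exact K.norm_add_sq_of_mem_orthogonal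
    (Kᗮ.sub_mem (K.sub_starProjection_mem_orthogonal x) hxb)
    (K.sub_mem (K.starProjection_apply_mem x) hv)

lemma norm_sub_starProjection_sub_le_infDist (hxb : xb ∈ Kᗮ) {S : Set E} (hS : S.Nonempty)
    (hSK : ∀ y ∈ S, ∃ v ∈ K, y = xb + v) (x : E) :
    ‖x - K.starProjection x - xb‖ ≤ Metric.infDist x S := by
  refine (Metric.le_infDist hS).2 fun y hy ↦ ?_
  obtain ⟨v, hv, rfl⟩ := hSK y hy
  rw [dist_eq_norm, ← sq_le_sq₀ (norm_nonneg _) (norm_nonneg _), K.norm_sub_add_sq hxb hv]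
  exact le_add_of_nonneg_right (sq_nonneg _)

open Metric in
theorem infDist_sphere_mul_le_infDist_ball_add (hK : K ≠ ⊥) (hxb : xb ∈ Kᗮ)
    (hxb1 : ‖xb‖ ≤ 1) {x : E} (hx : ‖x‖ ≤ 1) :
    infDist x {y | (∃ v ∈ K, y = xb + v) ∧ ‖y‖ = 1} * √((1 - ‖xb‖) / 2) ≤
      infDist x {y | (∃ v ∈ K, y = xb + v) ∧ ‖y‖ ≤ 1} + √(1 - ‖x‖ ^ 2) := by
  obtain ⟨r, hr0, hr⟩ : ∃ r : ℝ, 0 ≤ r ∧ ‖xb‖ ^ 2 + r ^ 2 = 1 :=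
    ⟨√(1 - ‖xb‖ ^ 2), Real.sqrt_nonneg _, by rw [Real.sq_sqrt (by nlinarith [norm_nonneg xb])]; ring⟩
  obtain ⟨v, hvK, hvr, hwv⟩ :=
    K.exists_mem_norm_eq_and_norm_sub_eq hK (K.starProjection_apply_mem x) hr0
  have hy : ‖xb + v‖ = 1 := by
    rw [← pow_eq_one_iff_of_nonneg (norm_nonneg _) two_ne_zero,
      K.norm_add_sq_of_mem_orthogonal hxb hvK, hvr, hr]
  have hupper : infDist x {y | (∃ v ∈ K, y = xb + v) ∧ ‖y‖ = 1} ≤ ‖x - (xb + v)‖ := by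
    rw [← dist_eq_norm]; exact infDist_le_dist_of_mem ⟨⟨v, hvK, rfl⟩, hy⟩
  have hlower : ‖x - K.starProjection x - xb‖ ≤
      infDist x {y | (∃ v ∈ K, y = xb + v) ∧ ‖y‖ ≤ 1} := by
    refine K.norm_sub_starProjection_sub_le_infDist hxb ⟨xb + v, ?_⟩ (fun _ hy ↦ hy.1) x
    exact ⟨⟨v, hvK, rfl⟩, hy.le⟩
  have hc : ‖x - K.starProjection x‖ ^ 2 + ‖K.starProjection x‖ ^ 2 + √(1 - ‖x‖ ^ 2) ^ 2 = 1 := by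
    have hpyth := K.norm_add_sq_of_mem_orthogonal (K.sub_starProjection_mem_orthogonal x)
      (K.starProjection_apply_mem x)
    rw [sub_add_cancel] at hpyth
    rw [Real.sq_sqrt (by nlinarith [norm_nonneg x]), ← hpyth]; ring
  have hkey : √((1 - ‖xb‖) / 2) * ‖x - (xb + v)‖ ≤
      ‖x - K.starProjection x - xb‖ + √(1 - ‖x‖ ^ 2) := by
    rw [← sq_le_sq₀ (by positivity) (by positivity), mul_pow, Real.sq_sqrt (by linarith),
      K.norm_sub_add_sq hxb hvK, hwv, sq_abs]
    exact hardCase_dist_sq_ineq (norm_nonneg _) hxb1 hr0 hr (norm_nonneg _)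
      (Real.sqrt_nonneg _) hc (abs_norm_sub_norm_le _ _)
  calc _ ≤ ‖x - (xb + v)‖ * √((1 - ‖xb‖) / 2) := by gcongr
    _ ≤ ‖x - K.starProjection x - xb‖ + √(1 - ‖x‖ ^ 2) := by rwa [mul_comm]
    _ ≤ _ := by gcongr

end Submodule

/-- In the hard case 2 (ii) geometry, every `y ∈ S₀` satisfies
`‖y − x̄‖ = √(1 − ‖x̄‖²)`, and with `sin γ = (1 − ‖x̄‖)/√((1 − ‖x̄‖)² + 1 − ‖x̄‖²) ∈ (0,1)`,
`dist(x, S₁) + √(1 − ‖x‖²) ≥ dist(x, S₀)·sin γ` for all `x` in the unit ball. -/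
theorem trs_hard_case_distance_inequality
    (n : ℕ) (V : Submodule ℝ (EuclideanSpace ℝ (Fin n))) (hV : V ≠ ⊥)
    (xb : EuclideanSpace ℝ (Fin n)) (hxb : xb ∈ Vᗮ) (hxbn : ‖xb‖ < 1)
    (S0 S1 : Set (EuclideanSpace ℝ (Fin n)))
    (hS0 : S0 = {y | (∃ v ∈ V, y = xb + v) ∧ ‖y‖ = 1})
    (hS1 : S1 = {y | (∃ v ∈ V, y = xb + v) ∧ ‖y‖ ≤ 1})
    (sg : ℝ)
    (hsg : sg = (1 - ‖xb‖) / Real.sqrt ((1 - ‖xb‖) ^ 2 + 1 - ‖xb‖ ^ 2)) :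
    (∀ y ∈ S0, ‖y - xb‖ = Real.sqrt (1 - ‖xb‖ ^ 2)) ∧
    (0 < sg ∧ sg < 1) ∧
    (∀ x : EuclideanSpace ℝ (Fin n), ‖x‖ ≤ 1 →
      Metric.infDist x S0 * sg ≤ Metric.infDist x S1 + Real.sqrt (1 - ‖x‖ ^ 2)) := by
  subst hS0 hS1 hsg
  rw [sub_div_sqrt_eq_sqrt_half hxbn]
  have hxb0 := norm_nonneg xb
  refine ⟨?_, ⟨Real.sqrt_pos.2 (by linarith), (Real.sqrt_lt' one_pos).2 (by linarith)⟩,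
    fun x hx ↦ V.infDist_sphere_mul_le_infDist_ball_add hV hxb hxbn.le hx⟩
  rintro _ ⟨⟨v, hv, rfl⟩, hy⟩
  have hpyth := V.norm_add_sq_of_mem_orthogonal hxb hv
  rw [hy] at hpyth
  rw [add_sub_cancel_left, ← Real.sqrt_sq (norm_nonneg v)]
  congr 1; linarith
end

section
/- Let A be a real symmetric n×n matrix with smallest eigenvalue λ₁ < 0, b ∈ ℝⁿ with b ⟂ Null(A − λ₁I) and ‖(A − λ₁I)†b‖ < 1 (hard case 2 (ii)). Then there exists τ > 0 such that dist(x, S₀) ≤ τ·(f(x) − f*)^{1/2} for all x in the closed unit ball, where f(x) = xᵀAx − 2bᵀx, f* is the minimum of f over the ball, and S₀ is the solution set. -/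
open Matrix

lemma dot_eq_inner (n : ℕ) (x y : EuclideanSpace ℝ (Fin n)) :
    (x : Fin n → ℝ) ⬝ᵥ y = @inner ℝ _ _ x y := by
  simp [dotProduct, PiLp.inner_apply, RCLike.inner_apply, conj_trivial, mul_comm]

lemma dot_self_eq_norm_sq (n : ℕ) (x : EuclideanSpace ℝ (Fin n)) :
    (x : Fin n → ℝ) ⬝ᵥ x = ‖x‖ ^ 2 := by
  rw [dot_eq_inner, real_inner_self_eq_norm_sq]

lemma quad_cont (n : ℕ) (B : Matrix (Fin n) (Fin n) ℝ) :
    Continuous fun w : EuclideanSpace ℝ (Fin n) => (w : Fin n → ℝ) ⬝ᵥ (B *ᵥ w) := by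
  simp only [dotProduct, mulVec]
  fun_prop

lemma aux_delta (n : ℕ) (B : Matrix (Fin n) (Fin n) ℝ)
    (hpos : ∀ x : Fin n → ℝ, 0 ≤ x ⬝ᵥ (B *ᵥ x))
    (hker : ∀ x : Fin n → ℝ, x ⬝ᵥ (B *ᵥ x) = 0 → B *ᵥ x = 0)
    (N : Submodule ℝ (EuclideanSpace ℝ (Fin n)))
    (hN : ∀ v : EuclideanSpace ℝ (Fin n), v ∈ N ↔ B *ᵥ v = 0) :
    ∃ δ > 0, ∀ w : EuclideanSpace ℝ (Fin n), w ∈ Nᗮ →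
      δ * ‖w‖ ^ 2 ≤ (w : Fin n → ℝ) ⬝ᵥ (B *ᵥ w) := by
  by_cases htriv : ∀ w ∈ Nᗮ, w = (0 : EuclideanSpace ℝ (Fin n))
  · exact ⟨1, one_pos, fun w hw => by
      rw [htriv w hw]; simpa using hpos 0⟩
  push_neg at htriv
  obtain ⟨w₀, hw₀, hw₀0⟩ := htriv
  set S : Set (EuclideanSpace ℝ (Fin n)) := (Nᗮ : Set _) ∩ Metric.sphere 0 1 with hS
  have hScomp : IsCompact S :=
    (isCompact_sphere (0 : EuclideanSpace ℝ (Fin n)) 1).inter_left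
      Nᗮ.closed_of_finiteDimensional
  have hSne : S.Nonempty := by
    refine ⟨‖w₀‖⁻¹ • w₀, Nᗮ.smul_mem _ hw₀, ?_⟩
    simp [norm_smul, norm_ne_zero_iff.mpr hw₀0,
      inv_mul_cancel₀ (norm_ne_zero_iff.mpr hw₀0)]
  obtain ⟨u₀, hu₀S, hmin⟩ := hScomp.exists_isMinOn hSne ((quad_cont n B).continuousOn)
  set δ := (u₀ : Fin n → ℝ) ⬝ᵥ (B *ᵥ u₀) with hδ
  have hu₀orth : u₀ ∈ Nᗮ := hu₀S.1
  have hu₀norm : ‖u₀‖ = 1 := by simpa using hu₀S.2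
  have hδpos : 0 < δ := by
    rcases lt_or_eq_of_le (hpos u₀) with h | h
    · exact h
    · exfalso
      have hB0 : B *ᵥ u₀ = 0 := hker u₀ h.symm
      have hu₀N : u₀ ∈ N := (hN u₀).mpr hB0
      have : u₀ = 0 := by
        have := (Submodule.mem_orthogonal Nᗮ u₀).mp ?_ u₀ hu₀orth
        · exact inner_self_eq_zero.mp this
        · exact Submodule.le_orthogonal_orthogonal N hu₀N
      rw [this] at hu₀norm; simp at hu₀norm
  refine ⟨δ, hδpos, fun w hw => ?_⟩
  by_cases hw0 : w = 0
  · simp [hw0, hpos]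
  · have hnw : (0:ℝ) < ‖w‖ := norm_pos_iff.mpr hw0
    have huS : (‖w‖⁻¹ • w) ∈ S :=
      ⟨Nᗮ.smul_mem _ hw, by simp [norm_smul, inv_mul_cancel₀ hnw.ne']⟩
    have hd : δ ≤ ((‖w‖⁻¹ • w : EuclideanSpace ℝ (Fin n)) : Fin n → ℝ) ⬝ᵥ
        (B *ᵥ (‖w‖⁻¹ • w : EuclideanSpace ℝ (Fin n))) := hmin huS
    have hexp : ((‖w‖⁻¹ • w : EuclideanSpace ℝ (Fin n)) : Fin n → ℝ) ⬝ᵥ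
        (B *ᵥ (‖w‖⁻¹ • w : EuclideanSpace ℝ (Fin n)))
        = ‖w‖⁻¹ * ‖w‖⁻¹ * ((w : Fin n → ℝ) ⬝ᵥ (B *ᵥ w)) := by
      show ((‖w‖⁻¹ • (w : Fin n → ℝ)) ⬝ᵥ (B *ᵥ (‖w‖⁻¹ • (w : Fin n → ℝ)))) = _
      rw [mulVec_smul, smul_dotProduct, dotProduct_smul]
      simp [smul_eq_mul]; ring
    rw [hexp] at hd
    have : δ * ‖w‖ ^ 2 ≤ (‖w‖⁻¹ * ‖w‖⁻¹ * ((w : Fin n → ℝ) ⬝ᵥ (B *ᵥ w))) * ‖w‖ ^ 2 := by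
      apply mul_le_mul_of_nonneg_right hd (by positivity)
    calc δ * ‖w‖ ^ 2 ≤ _ := this
      _ = (w : Fin n → ℝ) ⬝ᵥ (B *ᵥ w) := by
          rw [pow_two, show ‖w‖⁻¹ * ‖w‖⁻¹ * ((w : Fin n → ℝ) ⬝ᵥ (B *ᵥ w)) * (‖w‖ * ‖w‖)
            = (‖w‖⁻¹ * ‖w‖) * (‖w‖⁻¹ * ‖w‖) * ((w : Fin n → ℝ) ⬝ᵥ (B *ᵥ w)) from by ring,
            inv_mul_cancel₀ hnw.ne']
          ring

lemma aux_id (n : ℕ) (B : Matrix (Fin n) (Fin n) ℝ)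
    (hsym : ∀ x y : Fin n → ℝ, x ⬝ᵥ (B *ᵥ y) = y ⬝ᵥ (B *ᵥ x))
    (lam1 : ℝ) (xs y : Fin n → ℝ) :
    (y ⬝ᵥ (B *ᵥ y) + lam1 * (y ⬝ᵥ y) - 2 * ((B *ᵥ xs) ⬝ᵥ y))
      - (xs ⬝ᵥ (B *ᵥ xs) + lam1 * (xs ⬝ᵥ xs) - 2 * ((B *ᵥ xs) ⬝ᵥ xs))
    = (y - xs) ⬝ᵥ (B *ᵥ (y - xs)) + lam1 * (y ⬝ᵥ y - xs ⬝ᵥ xs) := by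
  have h1 : (B *ᵥ xs) ⬝ᵥ y = xs ⬝ᵥ (B *ᵥ y) := by
    rw [dotProduct_comm, hsym]
  have h2 : (B *ᵥ xs) ⬝ᵥ xs = xs ⬝ᵥ (B *ᵥ xs) := dotProduct_comm _ _
  have h3 : y ⬝ᵥ (B *ᵥ xs) = xs ⬝ᵥ (B *ᵥ y) := hsym y xs
  rw [Matrix.mulVec_sub, dotProduct_sub, sub_dotProduct, sub_dotProduct]
  rw [h1, h2, h3]
  ring

lemma aux_qsplit (n : ℕ) (B : Matrix (Fin n) (Fin n) ℝ)
    (hsym : ∀ x y : Fin n → ℝ, x ⬝ᵥ (B *ᵥ y) = y ⬝ᵥ (B *ᵥ x))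
    (p w : Fin n → ℝ) (hw : B *ᵥ w = 0) :
    (p + w) ⬝ᵥ (B *ᵥ (p + w)) = p ⬝ᵥ (B *ᵥ p) := by
  have h1 : w ⬝ᵥ (B *ᵥ p) = p ⬝ᵥ (B *ᵥ w) := hsym w p
  rw [Matrix.mulVec_add, dotProduct_add, add_dotProduct, add_dotProduct, h1, hw]
  simp

/-- In the hard case 2 (ii) (`λ₁ < 0`, `b ⟂ Null(A − λ₁I)`,
`‖(A − λ₁I)†b‖ < 1`), the TRS admits a Hölderian error bound with modulus 1/2:
there is `τ > 0` with `dist(x, S₀) ≤ τ·(f(x) − f*)^{1/2}` on the unit ball. -/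
theorem trs_hard_case_2ii_error_bound
    (n : ℕ) (A : Matrix (Fin n) (Fin n) ℝ) (b : Fin n → ℝ) (lam1 : ℝ)
    (hA : A.IsSymm)
    (hEig : ∃ v : Fin n → ℝ, v ≠ 0 ∧ A *ᵥ v = lam1 • v)
    (hLow : ∀ x : Fin n → ℝ, lam1 * (x ⬝ᵥ x) ≤ x ⬝ᵥ (A *ᵥ x))
    (hlam : lam1 < 0)
    (hbperp : ∀ v : Fin n → ℝ,
      (A - lam1 • (1 : Matrix (Fin n) (Fin n) ℝ)) *ᵥ v = 0 → b ⬝ᵥ v = 0)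
    (xbar : EuclideanSpace ℝ (Fin n))
    (hxbar : (A - lam1 • (1 : Matrix (Fin n) (Fin n) ℝ)) *ᵥ xbar = b)
    (hxbarperp : ∀ v : Fin n → ℝ,
      (A - lam1 • (1 : Matrix (Fin n) (Fin n) ℝ)) *ᵥ v = 0 → xbar ⬝ᵥ v = 0)
    (hxbarn : ‖xbar‖ < 1)
    (fstar : ℝ)
    (hfstar : IsLeast ((fun x : EuclideanSpace ℝ (Fin n) =>
      x ⬝ᵥ (A *ᵥ x) - 2 * (b ⬝ᵥ x)) '' {x | ‖x‖ ≤ 1}) fstar) :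
    ∃ τ > 0, ∀ x : EuclideanSpace ℝ (Fin n), ‖x‖ ≤ 1 →
      Metric.infDist x {y : EuclideanSpace ℝ (Fin n) | ‖y‖ ≤ 1 ∧
          y ⬝ᵥ (A *ᵥ y) - 2 * (b ⬝ᵥ y) = fstar}
        ≤ τ * Real.sqrt ((x ⬝ᵥ (A *ᵥ x) - 2 * (b ⬝ᵥ x)) - fstar) := by
  classical
  set B : Matrix (Fin n) (Fin n) ℝ := A - lam1 • (1 : Matrix (Fin n) (Fin n) ℝ) with hB
  have hmulB : ∀ x : Fin n → ℝ, B *ᵥ x = A *ᵥ x - lam1 • x := by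
    intro x
    rw [hB, Matrix.sub_mulVec, Matrix.smul_mulVec, Matrix.one_mulVec]
  have hsplit : ∀ x : Fin n → ℝ, x ⬝ᵥ (A *ᵥ x) = x ⬝ᵥ (B *ᵥ x) + lam1 * (x ⬝ᵥ x) := by
    intro x
    rw [hmulB, dotProduct_sub, dotProduct_smul]
    simp [smul_eq_mul]
  have hBpos : ∀ x : Fin n → ℝ, 0 ≤ x ⬝ᵥ (B *ᵥ x) := by
    intro x
    have h1 := hLow x
    have h2 := hsplit x
    linarith
  have hBsymM : B.IsSymm := by
    rw [hB, Matrix.IsSymm, Matrix.transpose_sub, Matrix.transpose_smul,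
      Matrix.transpose_one, hA.eq]
  have hBsym : ∀ x y : Fin n → ℝ, x ⬝ᵥ (B *ᵥ y) = y ⬝ᵥ (B *ᵥ x) := by
    intro x y
    rw [Matrix.dotProduct_mulVec, ← Matrix.mulVec_transpose, hBsymM.eq, dotProduct_comm]
  have hBH : B.IsHermitian := by
    rw [Matrix.IsHermitian, Matrix.conjTranspose_eq_transpose_of_trivial]
    exact hBsymM
  have hBpsd : B.PosSemidef := .of_dotProduct_mulVec_nonneg hBH fun x => by simpa using hBpos x
  have hBker : ∀ x : Fin n → ℝ, x ⬝ᵥ (B *ᵥ x) = 0 → B *ᵥ x = 0 := by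
    intro x hx
    exact (hBpsd.dotProduct_mulVec_zero_iff x).mp (by simpa using hx)
  -- the eigenspace as a submodule
  set N : Submodule ℝ (EuclideanSpace ℝ (Fin n)) :=
    { carrier := {v : EuclideanSpace ℝ (Fin n) | B *ᵥ v = 0}
      add_mem' := fun {a c} ha hc => by
        show B *ᵥ ((a : Fin n → ℝ) + (c : Fin n → ℝ)) = 0
        rw [Matrix.mulVec_add, ha, hc, add_zero]
      zero_mem' := by
        show B *ᵥ (0 : Fin n → ℝ) = 0
        simp
      smul_mem' := fun c a ha => by
        show B *ᵥ (c • (a : Fin n → ℝ)) = 0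
        rw [Matrix.mulVec_smul, ha, smul_zero] } with hNdef
  have hNmem : ∀ v : EuclideanSpace ℝ (Fin n), v ∈ N ↔ B *ᵥ (v : Fin n → ℝ) = 0 :=
    fun v => Iff.rfl
  obtain ⟨δ, hδpos, hδ⟩ := aux_delta n B hBpos hBker N hNmem
  have hxbarOrth : xbar ∈ Nᗮ := by
    rw [Submodule.mem_orthogonal]
    intro u hu
    rw [← dot_eq_inner, dotProduct_comm]
    exact hxbarperp u ((hNmem u).mp hu)
  -- the radius in the null direction
  set r : ℝ := Real.sqrt (1 - ‖xbar‖ ^ 2) with hrdef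
  have h1x : (0:ℝ) < 1 - ‖xbar‖ ^ 2 := by nlinarith [norm_nonneg xbar]
  have hr : 0 < r := Real.sqrt_pos.mpr h1x
  have hr2 : r ^ 2 = 1 - ‖xbar‖ ^ 2 := Real.sq_sqrt h1x.le
  -- the error-bound constant
  have hsδ : 0 < Real.sqrt δ := Real.sqrt_pos.mpr hδpos
  refine ⟨1 / Real.sqrt δ + (1 / r) * (Real.sqrt (2 / (-lam1)) + 2 / Real.sqrt δ),
    by positivity, ?_⟩
  intro x hx
  -- key identity
  have hkey : ∀ xs y : EuclideanSpace ℝ (Fin n), B *ᵥ (xs : Fin n → ℝ) = b →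
      ((y : Fin n → ℝ) ⬝ᵥ (A *ᵥ y) - 2 * (b ⬝ᵥ y))
        - ((xs : Fin n → ℝ) ⬝ᵥ (A *ᵥ xs) - 2 * (b ⬝ᵥ xs))
      = ((y - xs : EuclideanSpace ℝ (Fin n)) : Fin n → ℝ) ⬝ᵥ
          (B *ᵥ ((y - xs : EuclideanSpace ℝ (Fin n)) : Fin n → ℝ))
        + lam1 * ((y : Fin n → ℝ) ⬝ᵥ y - (xs : Fin n → ℝ) ⬝ᵥ xs) := by
    intro xs y hxs
    rw [hsplit y, hsplit xs, ← hxs]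
    exact aux_id n B hBsym lam1 xs y
  -- projections
  set xN : EuclideanSpace ℝ (Fin n) := (N.orthogonalProjection x : EuclideanSpace ℝ (Fin n))
    with hxNdef
  have hxNmem : xN ∈ N := (N.orthogonalProjection x).2
  set xP : EuclideanSpace ℝ (Fin n) := x - xN with hxPdef
  have hxPmem : xP ∈ Nᗮ := N.sub_starProjection_mem_orthogonal x
  have hxsum : x = xN + xP := by rw [hxPdef]; abel
  have hinnerNP : @inner ℝ _ _ xN xP = 0 :=
    Submodule.inner_right_of_mem_orthogonal hxNmem hxPmem
  have hpyth : ‖x‖ ^ 2 = ‖xN‖ ^ 2 + ‖xP‖ ^ 2 := by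
    calc ‖x‖ ^ 2 = ‖xN + xP‖ ^ 2 := by rw [← hxsum]
      _ = ‖xN‖ ^ 2 + 2 * @inner ℝ _ _ xN xP + ‖xP‖ ^ 2 := norm_add_sq_real xN xP
      _ = ‖xN‖ ^ 2 + ‖xP‖ ^ 2 := by rw [hinnerNP]; ring
  -- pick a unit vector in N aligned with xN
  obtain ⟨u, huN, hun, hxNu⟩ : ∃ u : EuclideanSpace ℝ (Fin n),
      u ∈ N ∧ ‖u‖ = 1 ∧ xN = ‖xN‖ • u := by
    by_cases h0 : xN = 0
    · obtain ⟨v, hv0, hveig⟩ := hEig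
      set v' : EuclideanSpace ℝ (Fin n) := WithLp.toLp 2 v with hv'def
      have hvN : v' ∈ N := by
        rw [hNmem, hv'def, WithLp.ofLp_toLp, hmulB, hveig, sub_self]
      have hvn0 : v' ≠ 0 := by rw [hv'def, Ne, WithLp.toLp_eq_zero]; exact hv0
      have hnv : (0:ℝ) < ‖v'‖ := norm_pos_iff.mpr hvn0
      refine ⟨‖v'‖⁻¹ • v', N.smul_mem _ hvN, ?_, ?_⟩
      · rw [norm_smul, Real.norm_eq_abs, abs_of_pos (by positivity)]
        exact inv_mul_cancel₀ hnv.ne'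
      · rw [h0, norm_zero, zero_smul]
    · have hnxN : (0:ℝ) < ‖xN‖ := norm_pos_iff.mpr h0
      refine ⟨‖xN‖⁻¹ • xN, N.smul_mem _ hxNmem, ?_, ?_⟩
      · rw [norm_smul, Real.norm_eq_abs, abs_of_pos (by positivity)]
        exact inv_mul_cancel₀ hnxN.ne'
      · rw [smul_smul, mul_inv_cancel₀ hnxN.ne', one_smul]
  -- the candidate minimizer
  set xstar : EuclideanSpace ℝ (Fin n) := xbar + r • u with hxstardef
  have hBu : B *ᵥ (u : Fin n → ℝ) = 0 := (hNmem u).mp huN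
  have hBxstar : B *ᵥ (xstar : Fin n → ℝ) = b := by
    show B *ᵥ ((xbar : Fin n → ℝ) + r • (u : Fin n → ℝ)) = b
    rw [Matrix.mulVec_add, Matrix.mulVec_smul, hBu, smul_zero, add_zero, hxbar]
  have hinner_xbar_u : @inner ℝ _ _ xbar (r • u) = 0 := by
    rw [real_inner_smul_right]
    rw [show @inner ℝ _ _ xbar u = 0 from
      Submodule.inner_left_of_mem_orthogonal huN hxbarOrth]
    ring
  have hxstarnorm : ‖xstar‖ = 1 := by
    have h2 : ‖xstar‖ ^ 2 = 1 := by
      calc ‖xstar‖ ^ 2 = ‖xbar‖ ^ 2 + 2 * @inner ℝ _ _ xbar (r • u) + ‖r • u‖ ^ 2 :=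
            norm_add_sq_real xbar (r • u)
        _ = ‖xbar‖ ^ 2 + (r * 1) ^ 2 := by
            rw [hinner_xbar_u, norm_smul, hun, Real.norm_eq_abs, abs_of_pos hr]; ring
        _ = 1 := by rw [mul_one]; linarith [hr2]
    calc ‖xstar‖ = Real.sqrt (‖xstar‖ ^ 2) := (Real.sqrt_sq (norm_nonneg _)).symm
      _ = 1 := by rw [h2, Real.sqrt_one]
  -- xstar is a global minimizer
  have hfmin : ∀ y : EuclideanSpace ℝ (Fin n), ‖y‖ ≤ 1 →
      (xstar : Fin n → ℝ) ⬝ᵥ (A *ᵥ xstar) - 2 * (b ⬝ᵥ xstar)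
        ≤ (y : Fin n → ℝ) ⬝ᵥ (A *ᵥ y) - 2 * (b ⬝ᵥ y) := by
    intro y hy
    have hid := hkey xstar y hBxstar
    have hq := hBpos ((y - xstar : EuclideanSpace ℝ (Fin n)) : Fin n → ℝ)
    have hyy : (y : Fin n → ℝ) ⬝ᵥ y = ‖y‖ ^ 2 := dot_self_eq_norm_sq n y
    have hss : (xstar : Fin n → ℝ) ⬝ᵥ xstar = ‖xstar‖ ^ 2 := dot_self_eq_norm_sq n xstar
    have hy2 : ‖y‖ ^ 2 ≤ 1 := by nlinarith only [norm_nonneg y, hy]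
    rw [hyy, hss, hxstarnorm] at hid
    have hmul : 0 ≤ lam1 * (‖y‖ ^ 2 - 1) := by nlinarith only [hy2, hlam]
    linarith only [hq, hid, hmul]
  have hfxstar : (xstar : Fin n → ℝ) ⬝ᵥ (A *ᵥ xstar) - 2 * (b ⬝ᵥ xstar) = fstar := by
    obtain ⟨x₀, hx₀, hfx₀⟩ := hfstar.1
    have h1 : (xstar : Fin n → ℝ) ⬝ᵥ (A *ᵥ xstar) - 2 * (b ⬝ᵥ xstar) ≤ fstar := by
      rw [← hfx₀]; exact hfmin x₀ hx₀
    have h2 : fstar ≤ (xstar : Fin n → ℝ) ⬝ᵥ (A *ᵥ xstar) - 2 * (b ⬝ᵥ xstar) :=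
      hfstar.2 ⟨xstar, hxstarnorm.le, rfl⟩
    linarith only [h1, h2]
  have hxstarS : xstar ∈ {y : EuclideanSpace ℝ (Fin n) | ‖y‖ ≤ 1 ∧
      (y : Fin n → ℝ) ⬝ᵥ (A *ᵥ y) - 2 * (b ⬝ᵥ y) = fstar} := ⟨hxstarnorm.le, hfxstar⟩
  -- the error
  set e : ℝ := (x : Fin n → ℝ) ⬝ᵥ (A *ᵥ x) - 2 * (b ⬝ᵥ x) - fstar with hedef
  have hkeyx : e = ((x - xstar : EuclideanSpace ℝ (Fin n)) : Fin n → ℝ) ⬝ᵥ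
      (B *ᵥ ((x - xstar : EuclideanSpace ℝ (Fin n)) : Fin n → ℝ))
      + lam1 * (‖x‖ ^ 2 - 1) := by
    have hid := hkey xstar x hBxstar
    rw [dot_self_eq_norm_sq n x, dot_self_eq_norm_sq n xstar, hxstarnorm] at hid
    rw [hedef, ← hfxstar]
    rw [hid]
    norm_num
  have he0 : 0 ≤ e := by
    have h12 : fstar ≤ (x : Fin n → ℝ) ⬝ᵥ (A *ᵥ x) - 2 * (b ⬝ᵥ x) :=
      hfstar.2 ⟨x, hx, rfl⟩
    rw [hedef]; linarith only [h12]
  -- decomposition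
  have hdecomp : x - xstar = (xP - xbar) + (xN - r • u) := by
    rw [hxstardef, hxPdef]; abel
  have hwN : (xN - r • u : EuclideanSpace ℝ (Fin n)) ∈ N :=
    N.sub_mem hxNmem (N.smul_mem r huN)
  have hBw : B *ᵥ ((xN - r • u : EuclideanSpace ℝ (Fin n)) : Fin n → ℝ) = 0 :=
    (hNmem _).mp hwN
  have hqeq : ((x - xstar : EuclideanSpace ℝ (Fin n)) : Fin n → ℝ) ⬝ᵥ
      (B *ᵥ ((x - xstar : EuclideanSpace ℝ (Fin n)) : Fin n → ℝ))
      = ((xP - xbar : EuclideanSpace ℝ (Fin n)) : Fin n → ℝ) ⬝ᵥ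
        (B *ᵥ ((xP - xbar : EuclideanSpace ℝ (Fin n)) : Fin n → ℝ)) := by
    rw [hdecomp]
    exact aux_qsplit n B hBsym (xP - xbar) (xN - r • u) hBw
  -- bound on the orthogonal part
  have hPorth : (xP - xbar : EuclideanSpace ℝ (Fin n)) ∈ Nᗮ :=
    Nᗮ.sub_mem hxPmem hxbarOrth
  have hPbound : δ * ‖xP - xbar‖ ^ 2 ≤ e := by
    have h1 := hδ (xP - xbar) hPorth
    have hxn2 : ‖x‖ ^ 2 ≤ 1 := by nlinarith only [norm_nonneg x, hx]
    have h2 : lam1 * (‖x‖ ^ 2 - 1) ≥ 0 := by nlinarith only [hxn2, hlam]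
    rw [hkeyx, hqeq]
    linarith only [h1, h2]
  have hlamBound : (-lam1) * (1 - ‖x‖ ^ 2) ≤ e := by
    have hq := hBpos ((x - xstar : EuclideanSpace ℝ (Fin n)) : Fin n → ℝ)
    rw [hkeyx]
    have heq : (-lam1) * (1 - ‖x‖ ^ 2) = lam1 * (‖x‖ ^ 2 - 1) := by ring
    linarith only [hq, heq]
  set s : ℝ := Real.sqrt e with hsdef
  have hs0 : 0 ≤ s := Real.sqrt_nonneg e
  have hse : s ^ 2 = e := Real.sq_sqrt he0
  -- bound ‖xP - xbar‖ ≤ s / sqrt δ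
  have hPs : ‖xP - xbar‖ ≤ s / Real.sqrt δ := by
    have h1 : ‖xP - xbar‖ ^ 2 ≤ e / δ := by
      rw [le_div_iff₀ hδpos]
      linarith only [hPbound]
    have h2 : ‖xP - xbar‖ ≤ Real.sqrt (e / δ) := by
      rw [show e / δ = (Real.sqrt (e / δ)) ^ 2 from
        (Real.sq_sqrt (by positivity)).symm] at h1
      nlinarith only [Real.sqrt_nonneg (e / δ), norm_nonneg (xP - xbar), h1]
    calc ‖xP - xbar‖ ≤ Real.sqrt (e / δ) := h2
      _ = s / Real.sqrt δ := by rw [Real.sqrt_div he0]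
  -- bound 1 - ‖x‖² ≤ sqrt(2/(-lam1)) * s
  have hxnorm2 : ‖x‖ ^ 2 ≤ 1 := by nlinarith only [norm_nonneg x, hx]
  have hnls : 1 - ‖x‖ ^ 2 ≤ Real.sqrt (2 / (-lam1)) * s := by
    have h1 : (1 - ‖x‖ ^ 2) ^ 2 ≤ (2 / (-lam1)) * e := by
      have h2 : 1 - ‖x‖ ^ 2 ≤ e / (-lam1) := by
        rw [le_div_iff₀ (by linarith only [hlam] : (0:ℝ) < -lam1)]
        linarith only [hlamBound]
      have h3 : 0 ≤ 1 - ‖x‖ ^ 2 := by linarith only [hxnorm2]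
      have h4 : 1 - ‖x‖ ^ 2 ≤ 2 := by nlinarith only [norm_nonneg x]
      calc (1 - ‖x‖ ^ 2) ^ 2 ≤ 2 * (1 - ‖x‖ ^ 2) := by nlinarith only [h3, h4]
        _ ≤ 2 * (e / (-lam1)) := by linarith only [h2]
        _ = (2 / (-lam1)) * e := by ring
    calc 1 - ‖x‖ ^ 2 = Real.sqrt ((1 - ‖x‖ ^ 2) ^ 2) :=
          (Real.sqrt_sq (by linarith only [hxnorm2])).symm
      _ ≤ Real.sqrt ((2 / (-lam1)) * e) := Real.sqrt_le_sqrt h1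
      _ = Real.sqrt (2 / (-lam1)) * s :=
          Real.sqrt_mul (le_of_lt (div_pos two_pos (by linarith only [hlam]))) e
  -- bound on the null part
  have hxPle : ‖xP‖ ≤ 1 := by
    nlinarith only [norm_nonneg xP, norm_nonneg xN, hpyth, hxnorm2]
  have hNpart : ‖xN - r • u‖ ≤ (1 / r) * ((1 - ‖x‖ ^ 2) + 2 * ‖xP - xbar‖) := by
    have hnorm_eq : ‖xN - r • u‖ = |‖xN‖ - r| := by
      conv_lhs => rw [hxNu]
      rw [← sub_smul, norm_smul, hun, mul_one, Real.norm_eq_abs]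
    have habs2 : |‖xN‖ ^ 2 - r ^ 2| ≤ (1 - ‖x‖ ^ 2) + 2 * ‖xP - xbar‖ := by
      have hsplit2 : ‖xN‖ ^ 2 - r ^ 2 = (‖x‖ ^ 2 - 1) + (‖xbar‖ ^ 2 - ‖xP‖ ^ 2) := by
        rw [hr2]; linarith only [hpyth]
      have hc : |‖xbar‖ ^ 2 - ‖xP‖ ^ 2| ≤ 2 * ‖xP - xbar‖ := by
        have h5 : |‖xbar‖ - ‖xP‖| ≤ ‖xbar - xP‖ := abs_norm_sub_norm_le xbar xP
        have h6 : ‖xbar - xP‖ = ‖xP - xbar‖ := norm_sub_rev xbar xP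
        have h7 : |‖xbar‖ ^ 2 - ‖xP‖ ^ 2| = |‖xbar‖ - ‖xP‖| * (‖xbar‖ + ‖xP‖) := by
          rw [show ‖xbar‖ ^ 2 - ‖xP‖ ^ 2 = (‖xbar‖ - ‖xP‖) * (‖xbar‖ + ‖xP‖) from by ring,
            abs_mul, abs_of_nonneg (by positivity : (0:ℝ) ≤ ‖xbar‖ + ‖xP‖)]
        rw [h7]
        have h8 : ‖xbar‖ + ‖xP‖ ≤ 2 := by linarith only [hxbarn.le, hxPle]
        calc |‖xbar‖ - ‖xP‖| * (‖xbar‖ + ‖xP‖) ≤ ‖xP - xbar‖ * 2 := by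
              apply mul_le_mul (h6 ▸ h5) h8 (by positivity) (norm_nonneg _)
          _ = 2 * ‖xP - xbar‖ := by ring
      calc |‖xN‖ ^ 2 - r ^ 2| = |(‖x‖ ^ 2 - 1) + (‖xbar‖ ^ 2 - ‖xP‖ ^ 2)| := by
            rw [hsplit2]
        _ ≤ |‖x‖ ^ 2 - 1| + |‖xbar‖ ^ 2 - ‖xP‖ ^ 2| := abs_add_le _ _
        _ ≤ (1 - ‖x‖ ^ 2) + 2 * ‖xP - xbar‖ := by
            rw [abs_of_nonpos (by linarith only [hxnorm2] : ‖x‖ ^ 2 - 1 ≤ 0)]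
            linarith only [hc]
    have hfact : |‖xN‖ - r| * r ≤ |‖xN‖ ^ 2 - r ^ 2| := by
      have h9 : |‖xN‖ ^ 2 - r ^ 2| = |‖xN‖ - r| * (‖xN‖ + r) := by
        rw [show ‖xN‖ ^ 2 - r ^ 2 = (‖xN‖ - r) * (‖xN‖ + r) from by ring, abs_mul,
          abs_of_nonneg (by positivity : (0:ℝ) ≤ ‖xN‖ + r)]
      rw [h9]
      apply mul_le_mul_of_nonneg_left _ (abs_nonneg _)
      linarith only [norm_nonneg xN]
    rw [hnorm_eq]
    have h10 : |‖xN‖ - r| ≤ (1 / r) * (|‖xN‖ - r| * r) := by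
      rw [show (1 / r) * (|‖xN‖ - r| * r) = |‖xN‖ - r| * (r / r) from by ring,
        div_self hr.ne', mul_one]
    calc |‖xN‖ - r| ≤ (1 / r) * (|‖xN‖ - r| * r) := h10
      _ ≤ (1 / r) * ((1 - ‖x‖ ^ 2) + 2 * ‖xP - xbar‖) := by
          apply mul_le_mul_of_nonneg_left _ (by positivity)
          linarith only [hfact, habs2, hnorm_eq]
  -- put everything together
  have hdistle : Metric.infDist x {y : EuclideanSpace ℝ (Fin n) | ‖y‖ ≤ 1 ∧
      (y : Fin n → ℝ) ⬝ᵥ (A *ᵥ y) - 2 * (b ⬝ᵥ y) = fstar} ≤ ‖x - xstar‖ := by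
    rw [← dist_eq_norm]
    exact Metric.infDist_le_dist_of_mem hxstarS
  have htri : ‖x - xstar‖ ≤ ‖xP - xbar‖ + ‖xN - r • u‖ := by
    rw [hdecomp]
    exact norm_add_le _ _
  calc Metric.infDist x {y : EuclideanSpace ℝ (Fin n) | ‖y‖ ≤ 1 ∧
        (y : Fin n → ℝ) ⬝ᵥ (A *ᵥ y) - 2 * (b ⬝ᵥ y) = fstar} ≤ ‖x - xstar‖ := hdistle
    _ ≤ ‖xP - xbar‖ + ‖xN - r • u‖ := htri
    _ ≤ s / Real.sqrt δ + (1 / r) * (Real.sqrt (2 / (-lam1)) * s + 2 * (s / Real.sqrt δ)) := by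
        have := hNpart
        have h11 : (1 / r) * ((1 - ‖x‖ ^ 2) + 2 * ‖xP - xbar‖)
            ≤ (1 / r) * (Real.sqrt (2 / (-lam1)) * s + 2 * (s / Real.sqrt δ)) := by
          apply mul_le_mul_of_nonneg_left _ (by positivity)
          linarith only [hnls, hPs]
        linarith only [hPs, hNpart, h11]
    _ = (1 / Real.sqrt δ + (1 / r) * (Real.sqrt (2 / (-lam1)) + 2 / Real.sqrt δ)) * s := by
        field_simp
end

section
/- Let A be a real symmetric matrix with smallest eigenvalue λ₁ < 0, b ∈ ℝⁿ, x* a unit-norm minimizer of f(x) = xᵀAx − 2bᵀx over the unit ball with multiplier λ* = −λ₁ (hard case), so (A − λ₁I)x* = b. Write D = A − λ₁I, z = x − x*, α = (x*)ᵀD z, β = zᵀD z. Then for every x on the unit sphere with ⟨−2(Ax − b), x⟩ > 0, the squared distance from −∇f(x) to the normal cone N_B(x) equals 4(‖Dz‖² − (α + β)²). -/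
open Matrix

noncomputable def toE {n : ℕ} (v : Fin n → ℝ) : EuclideanSpace ℝ (Fin n) := WithLp.toLp 2 v

lemma inner_toE {n : ℕ} (u v : Fin n → ℝ) :
    (inner ℝ (toE u) (toE v) : ℝ) = u ⬝ᵥ v := by
  simp [toE, PiLp.inner_apply, dotProduct, mul_comm]

lemma norm_sq_toE {n : ℕ} (u : Fin n → ℝ) : ‖toE u‖ ^ 2 = u ⬝ᵥ u := by
  rw [← inner_toE u u, real_inner_self_eq_norm_sq]

/-- In the hard case (`λ* = −λ₁`, `(A − λ₁I)x* = b`, `‖x*‖ = 1`), for every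
unit-norm `x` with `⟨−2(Ax − b), x⟩ > 0`, writing `D = A − λ₁I`, `z = x − x*`,
`α = (x*)ᵀDz`, `β = zᵀDz`, one has
`dist(−∇f(x), N_B(x))² = 4(‖Dz‖² − (α + β)²)`. -/
theorem trs_hard_case_normal_cone_distance_formula
    (n : ℕ) (A : Matrix (Fin n) (Fin n) ℝ) (b : Fin n → ℝ) (lam1 : ℝ)
    (hA : A.IsSymm)
    (hEig : ∃ v : Fin n → ℝ, v ≠ 0 ∧ A *ᵥ v = lam1 • v)
    (hLow : ∀ x : Fin n → ℝ, lam1 * (x ⬝ᵥ x) ≤ x ⬝ᵥ (A *ᵥ x))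
    (hlam : lam1 < 0)
    (xs : EuclideanSpace ℝ (Fin n))
    (hxs : ‖xs‖ = 1)
    (hKKT : (A - lam1 • (1 : Matrix (Fin n) (Fin n) ℝ)) *ᵥ xs = b) :
    ∀ x : EuclideanSpace ℝ (Fin n), ‖x‖ = 1 → 0 < -(2 * ((A *ᵥ x - b) ⬝ᵥ x)) →
      (Metric.infDist (toE (-((2 : ℝ) • (A *ᵥ x - b))))
          {y : EuclideanSpace ℝ (Fin n) | ∃ t : ℝ, 0 ≤ t ∧ y = t • x}) ^ 2
        = 4 * (‖toE ((A - lam1 • (1 : Matrix (Fin n) (Fin n) ℝ)) *ᵥ (x - xs))‖ ^ 2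
            - (xs ⬝ᵥ ((A - lam1 • (1 : Matrix (Fin n) (Fin n) ℝ)) *ᵥ (x - xs))
               + (x - xs) ⬝ᵥ ((A - lam1 • (1 : Matrix (Fin n) (Fin n) ℝ)) *ᵥ (x - xs))) ^ 2) := by
  intro x hx hpos
  classical
  set D : Matrix (Fin n) (Fin n) ℝ := A - lam1 • (1 : Matrix (Fin n) (Fin n) ℝ) with hD
  set u : Fin n → ℝ := A *ᵥ x - b with hu
  set w : Fin n → ℝ := D *ᵥ ((x : Fin n → ℝ) - xs) with hw
  set g : EuclideanSpace ℝ (Fin n) := toE (-((2 : ℝ) • u)) with hg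
  set S : Set (EuclideanSpace ℝ (Fin n)) := {y | ∃ t : ℝ, 0 ≤ t ∧ y = t • x} with hS
  set c : ℝ := inner ℝ g x with hc
  -- basic dot-product facts
  have hxx : (x : Fin n → ℝ) ⬝ᵥ (x : Fin n → ℝ) = 1 := by
    have := norm_sq_toE (n := n) x
    rw [show toE (n := n) x = x from rfl, hx] at this
    simpa using this.symm
  have hc_eq : c = -(2 * (u ⬝ᵥ (x : Fin n → ℝ))) := by
    have h1 : (inner ℝ (toE (-((2:ℝ) • u))) (toE (n := n) x) : ℝ) = (-((2:ℝ) • u)) ⬝ᵥ x :=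
      inner_toE _ _
    rw [hc, show (inner ℝ g x : ℝ) = inner ℝ (toE (-((2:ℝ) • u))) (toE (n := n) x) from rfl, h1,
      neg_dotProduct, smul_dotProduct, smul_eq_mul]
  have hcpos : 0 < c := by rw [hc_eq]; exact hpos
  -- pointwise identity u i = w i + lam1 * x i
  have huw : ∀ i, u i = w i + lam1 * x i := by
    intro i
    have hb : D *ᵥ (xs : Fin n → ℝ) = b := hKKT
    have : w = D *ᵥ (x : Fin n → ℝ) - b := by
      rw [hw, Matrix.mulVec_sub, hb]
    have hDx : (D *ᵥ (x : Fin n → ℝ)) i = (A *ᵥ x) i - lam1 * x i := by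
      rw [hD, Matrix.sub_mulVec]
      simp [Matrix.smul_mulVec, Matrix.one_mulVec]
    have hwi := congrFun this i
    rw [Pi.sub_apply, hDx] at hwi
    rw [hu, Pi.sub_apply, hwi]
    ring
  -- expansion of squared norms along the ray
  have expand : ∀ t : ℝ, ‖g - t • x‖ ^ 2 = ‖g‖ ^ 2 - 2 * t * c + t ^ 2 := by
    intro t
    rw [norm_sub_sq_real, real_inner_smul_right, norm_smul, ← hc]
    rw [hx]
    simp [mul_pow]
    ring
  have hSne : S.Nonempty := ⟨0, 0, le_refl 0, by simp⟩
  have hmem : c • x ∈ S := ⟨c, hcpos.le, rfl⟩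
  have hlb : ∀ y ∈ S, ‖g - c • x‖ ≤ dist g y := by
    rintro y ⟨t, ht, rfl⟩
    rw [dist_eq_norm]
    have h1 := expand t
    have h2 := expand c
    nlinarith [norm_nonneg (g - t • x), norm_nonneg (g - c • x), sq_nonneg (t - c)]
  have key : Metric.infDist g S = ‖g - c • x‖ := by
    apply le_antisymm
    · rw [← dist_eq_norm]; exact Metric.infDist_le_dist_of_mem hmem
    · by_contra h
      push_neg at h
      obtain ⟨y, hy, hlt⟩ := (Metric.infDist_lt_iff hSne).1 h
      exact absurd (hlb y hy) (not_le.2 hlt)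
  have hdist2 : Metric.infDist g S ^ 2 = ‖g‖ ^ 2 - c ^ 2 := by
    rw [key]
    have := expand c
    linarith
  -- compute ‖g‖^2
  have hgn : ‖g‖ ^ 2 = 4 * (u ⬝ᵥ u) := by
    rw [hg, norm_sq_toE, neg_dotProduct, dotProduct_neg, neg_neg,
      smul_dotProduct, dotProduct_smul, smul_eq_mul, smul_eq_mul]
    ring
  -- dot product identities
  have hux : u ⬝ᵥ (x : Fin n → ℝ) = w ⬝ᵥ (x : Fin n → ℝ) + lam1 := by
    have : u ⬝ᵥ (x : Fin n → ℝ) = w ⬝ᵥ (x : Fin n → ℝ) + lam1 * ((x : Fin n → ℝ) ⬝ᵥ x) := by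
      simp only [dotProduct, Finset.mul_sum]
      rw [← Finset.sum_add_distrib]
      refine Finset.sum_congr rfl fun i _ => ?_
      rw [huw i]; ring
    rw [this, hxx, mul_one]
  have huu : u ⬝ᵥ u = w ⬝ᵥ w + 2 * lam1 * (w ⬝ᵥ (x : Fin n → ℝ)) + lam1 ^ 2 := by
    have : u ⬝ᵥ u = w ⬝ᵥ w + 2 * lam1 * (w ⬝ᵥ (x : Fin n → ℝ))
        + lam1 ^ 2 * ((x : Fin n → ℝ) ⬝ᵥ x) := by
      simp only [dotProduct, Finset.mul_sum]
      rw [← Finset.sum_add_distrib, ← Finset.sum_add_distrib]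
      refine Finset.sum_congr rfl fun i _ => ?_
      rw [huw i]; ring
    rw [this, hxx, mul_one]
  have halpha : (xs : Fin n → ℝ) ⬝ᵥ w + ((x : Fin n → ℝ) - (xs : Fin n → ℝ)) ⬝ᵥ w
      = w ⬝ᵥ (x : Fin n → ℝ) := by
    rw [dotProduct_comm w]
    rw [← add_dotProduct]
    congr 1
    abel
  have hnw : ‖toE w‖ ^ 2 = w ⬝ᵥ w := norm_sq_toE w
  -- finish
  rw [show Metric.infDist (toE (-((2 : ℝ) • (A *ᵥ x - b)))) {y : EuclideanSpace ℝ (Fin n) | ∃ t : ℝ, 0 ≤ t ∧ y = t • x} = Metric.infDist g S from rfl]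
  rw [hdist2, hgn, hc_eq, hux, huu, hnw, WithLp.ofLp_sub, halpha]
  ring
end

section
/- Let h: ℝⁿ → (−∞, +∞] be proper, convex, lower-semicontinuous with minimum value 0 attained on S ≠ ∅. Suppose there exist τ > 0 and ρ ∈ (0,1] such that dist(x, S) ≤ τ·h(x)^ρ for all x. Then for all x with 0 < h(x) < ∞, one has h(x)^{1−ρ} ≤ (τ/ρ)·dist(0, ∂h(x)). -/
/-! Testing the subgradient inequality at `x` against a minimizer `y ∈ S` gives
`h x ≤ ⟪g, x - y⟫ ≤ ‖g‖ * dist x y`, hence `h x ≤ ‖g‖ * dist(x, S) ≤ τ ‖g‖ (h x)^ρ`.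
Dividing by `(h x)^ρ` yields `(h x)^(1-ρ) ≤ τ ‖g‖ ≤ (τ / ρ) ‖g‖`. -/

open Metric

theorem sub_le_inner_of_subgradient {E : Type*} [NormedAddCommGroup E] [InnerProductSpace ℝ E]
    {h : E → EReal} {x y g : E} {a b : ℝ} (hx : h x = a) (hy : h y = b)
    (hg : h x + ((inner ℝ g (y - x) : ℝ) : EReal) ≤ h y) :
    a - b ≤ inner ℝ g (x - y) := by
  rw [hx, hy] at hg
  have hab : a + inner ℝ g (y - x) ≤ b := by exact_mod_cast hg
  rw [← neg_sub y x, inner_neg_right]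
  linarith

theorem le_mul_infDist_of_forall_le {α : Type*} [PseudoMetricSpace α] {s : Set α}
    (hs : s.Nonempty) {x : α} {c t : ℝ} (hc : 0 ≤ c) (h : ∀ y ∈ s, t ≤ c * dist x y) :
    t ≤ c * infDist x s := by
  rcases hc.eq_or_lt with rfl | hc
  · obtain ⟨y, hy⟩ := hs
    simpa using h y hy
  · rw [← div_le_iff₀' hc, le_infDist hs]
    exact fun y hy => (div_le_iff₀' hc).2 (h y hy)

theorem rpow_one_sub_le_of_le_mul_rpow {t c ρ : ℝ} (ht : 0 < t) (h : t ≤ c * t ^ ρ) :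
    t ^ (1 - ρ) ≤ c := by
  rwa [Real.rpow_sub ht, Real.rpow_one, div_le_iff₀ (Real.rpow_pos_of_pos ht ρ)]

theorem error_bound_implies_KL_general
    (n : ℕ) (h : EuclideanSpace ℝ (Fin n) → EReal)
    (hnotbot : ∀ x, h x ≠ ⊥)
    (S : Set (EuclideanSpace ℝ (Fin n)))
    (hS : S = {x | h x = 0})
    (hSne : S.Nonempty)
    (τ ρ : ℝ) (hτ : 0 < τ) (hρ0 : 0 < ρ) (hρ1 : ρ ≤ 1)
    (hEB : ∀ x, h x ≠ ⊤ → Metric.infDist x S ≤ τ * (h x).toReal ^ ρ) :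
    ∀ x, 0 < h x → h x ≠ ⊤ →
      ∀ g : EuclideanSpace ℝ (Fin n),
        (∀ y, h x + ((inner ℝ g (y - x) : ℝ) : EReal) ≤ h y) →
        (h x).toReal ^ (1 - ρ) ≤ (τ / ρ) * ‖g‖ := by
  intro x hx0 hxtop g hg
  have hx : h x = ((h x).toReal : EReal) := (EReal.coe_toReal hxtop (hnotbot x)).symm
  have ht : 0 < (h x).toReal := EReal.toReal_pos hx0 hxtop
  have hS_le : ∀ y ∈ S, (h x).toReal ≤ ‖g‖ * dist x y := fun y hy => by
    have hy0 : h y = ((0 : ℝ) : EReal) := by rw [hS] at hy; exact hy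
    calc (h x).toReal = (h x).toReal - 0 := (sub_zero _).symm
      _ ≤ inner ℝ g (x - y) := sub_le_inner_of_subgradient hx hy0 (hg y)
      _ ≤ ‖g‖ * dist x y := by rw [dist_eq_norm]; exact real_inner_le_norm g (x - y)
  have hchain : (h x).toReal ≤ τ * ‖g‖ * (h x).toReal ^ ρ :=
    calc (h x).toReal ≤ ‖g‖ * infDist x S :=
          le_mul_infDist_of_forall_le hSne (norm_nonneg g) hS_le
      _ ≤ ‖g‖ * (τ * (h x).toReal ^ ρ) := by gcongr; exact hEB x hxtop
      _ = τ * ‖g‖ * (h x).toReal ^ ρ := by ring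
  calc (h x).toReal ^ (1 - ρ) ≤ τ * ‖g‖ := rpow_one_sub_le_of_le_mul_rpow ht hchain
    _ ≤ τ / ρ * ‖g‖ := by gcongr; exact le_div_self hτ.le hρ0 hρ1

/-- For a proper convex lower-semicontinuous `h : ℝⁿ → (−∞, +∞]` with
minimum value 0 attained on `S ≠ ∅`, a Hölderian error bound
`dist(x, S) ≤ τ·h(x)^ρ` (with `τ > 0`, `ρ ∈ (0,1]`) implies the KL inequality
`h(x)^{1−ρ} ≤ (τ/ρ)·‖g‖` for every subgradient `g ∈ ∂h(x)`, at every point with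
`0 < h(x) < ∞`. -/
theorem error_bound_implies_KL
    (n : ℕ) (h : EuclideanSpace ℝ (Fin n) → EReal)
    (hproper : ∃ x, h x ≠ ⊤)
    (hnotbot : ∀ x, h x ≠ ⊥)
    (hlsc : LowerSemicontinuous h)
    (hconvex : ∀ (x y : EuclideanSpace ℝ (Fin n)) (a c : ℝ), 0 ≤ a → 0 ≤ c → a + c = 1 →
      h (a • x + c • y) ≤ (a : EReal) * h x + (c : EReal) * h y)
    (S : Set (EuclideanSpace ℝ (Fin n)))
    (hS : S = {x | h x = 0})
    (hSne : S.Nonempty)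
    (hmin : ∀ x, 0 ≤ h x)
    (τ ρ : ℝ) (hτ : 0 < τ) (hρ0 : 0 < ρ) (hρ1 : ρ ≤ 1)
    (hEB : ∀ x, h x ≠ ⊤ → Metric.infDist x S ≤ τ * (h x).toReal ^ ρ) :
    ∀ x, 0 < h x → h x ≠ ⊤ →
      ∀ g : EuclideanSpace ℝ (Fin n),
        (∀ y, h x + ((inner ℝ g (y - x) : ℝ) : EReal) ≤ h y) →
        (h x).toReal ^ (1 - ρ) ≤ (τ / ρ) * ‖g‖ :=
  error_bound_implies_KL_general n h hnotbot S hS hSne τ ρ hτ hρ0 hρ1 hEB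
end

section
/- Let {r_k}_{k≥0} be a nonincreasing sequence of nonnegative reals and M > 0 a constant such that r_{k+1}^{3/2} ≤ M²(r_k − r_{k+1}) for all k ≥ 0. Then for all k ≥ 1, r_k ≤ 1/((k/(M²(2 + (3/(2M²))√r₀)) + 1/√r₀)², i.e., 1/√r_k − 1/√r_{k-1} ≥ 1/(M²(2 + (3/(2M²))√r₀)) whenever r_k > 0. -/
/-!
Put `s = √r_k` and `t = √r_{k+1}`. The recursion reads `t³ ≤ M²(s² - t²)`, and since
`t ≤ s ≤ √r₀` an elementary polynomial inequality upgrades it to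
`s t ≤ (2M² + (3/2)√r₀)(s - t)`, that is, `1/t - 1/s ≥ 1/(2M² + (3/2)√r₀)`.
Telescoping these steps bounds `1/√r_k` from below by a linear function of `k`.
-/

open Real

lemma add_nsmul_le_of_forall_add_le {α : Type*} [AddCommMonoid α] [PartialOrder α]
    [IsOrderedAddMonoid α] {u : ℕ → α} {δ : α} {k : ℕ} (h : ∀ j < k, u j + δ ≤ u (j + 1)) :
    u 0 + k • δ ≤ u k := by
  induction k with
  | zero => simp
  | succ k ih =>
    calc u 0 + (k + 1) • δ = u 0 + k • δ + δ := by rw [succ_nsmul, add_assoc]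
      _ ≤ u k + δ := by gcongr; exact ih fun j hj => h j (by omega)
      _ ≤ u (k + 1) := h k (by omega)

lemma le_one_div_sq_of_le_one_div_sqrt {x a : ℝ} (hx : 0 < x) (ha : 0 < a)
    (h : a ≤ 1 / √x) : x ≤ 1 / a ^ 2 := by
  have hsqrt : √x ≤ 1 / a := (le_one_div (sqrt_pos.mpr hx) ha).mpr h
  calc x = √x ^ 2 := (sq_sqrt hx.le).symm
    _ ≤ (1 / a) ^ 2 := pow_le_pow_left₀ (sqrt_nonneg x) hsqrt 2
    _ = 1 / a ^ 2 := by rw [div_pow, one_pow]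

section SqrtStep

variable {K S s t : ℝ}

lemma mul_le_mul_sub_of_pow_three_le (ht : 0 < t) (hts : t ≤ s) (hsS : s ≤ S)
    (h : t ^ 3 ≤ K * (s ^ 2 - t ^ 2)) : s * t ≤ (2 * K + 3 / 2 * S) * (s - t) := by
  -- `(s + t) s t ≤ 2t³ + (3/2) s (s² - t²)` because the difference factors as
  -- `(s - t)((3/2)s² + (1/2)st - 2t²)`.
  have hfactor : 0 ≤ (s - t) * (3 / 2 * s ^ 2 + 1 / 2 * s * t - 2 * t ^ 2) :=
    mul_nonneg (sub_nonneg.mpr hts) (by nlinarith)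
  have hS : s * (s ^ 2 - t ^ 2) ≤ S * (s ^ 2 - t ^ 2) :=
    mul_le_mul_of_nonneg_right hsS (by nlinarith)
  have hmul : (s + t) * (s * t) ≤ (s + t) * ((2 * K + 3 / 2 * S) * (s - t)) := by
    nlinarith
  exact le_of_mul_le_mul_left hmul (by linarith)

lemma one_div_le_one_div_sub_one_div_of_pow_three_le (ht : 0 < t) (hts : t ≤ s) (hsS : s ≤ S)
    (h : t ^ 3 ≤ K * (s ^ 2 - t ^ 2)) :
    1 / (K * (2 + 3 / (2 * K) * S)) ≤ 1 / t - 1 / s := by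
  have hs : 0 < s := ht.trans_le hts
  have hK : 0 < K := pos_of_mul_pos_left ((pow_pos ht 3).trans_le h) (by nlinarith)
  have hc : K * (2 + 3 / (2 * K) * S) = 2 * K + 3 / 2 * S := by field_simp
  rw [hc, div_sub_div _ _ ht.ne' hs.ne', one_mul, mul_one, mul_comm t s,
    div_le_div_iff₀ (by nlinarith) (mul_pos hs ht)]
  linarith [mul_le_mul_sub_of_pow_three_le ht hts hsS h]

end SqrtStep

section Recursion

variable {r : ℕ → ℝ} {K : ℝ}

lemma one_div_le_one_div_sqrt_succ_sub (hr : Antitone r)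
    (hrec : ∀ k, r (k + 1) ^ ((3 : ℝ) / 2) ≤ K * (r k - r (k + 1))) {k : ℕ}
    (hpos : 0 < r (k + 1)) :
    1 / (K * (2 + 3 / (2 * K) * √(r 0)))
      ≤ 1 / √(r (k + 1)) - 1 / √(r k) := by
  have hrk : 0 < r k := hpos.trans_le (hr k.le_succ)
  refine one_div_le_one_div_sub_one_div_of_pow_three_le (sqrt_pos.mpr hpos)
    (sqrt_le_sqrt (hr k.le_succ)) (sqrt_le_sqrt (hr k.zero_le)) ?_
  rw [sq_sqrt hrk.le, sq_sqrt hpos.le, ← rpow_natCast, ← rpow_div_two_eq_sqrt _ hpos.le]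
  exact_mod_cast hrec k

lemma nat_div_add_one_div_sqrt_le (hr : Antitone r)
    (hrec : ∀ k, r (k + 1) ^ ((3 : ℝ) / 2) ≤ K * (r k - r (k + 1))) {k : ℕ}
    (hpos : 0 < r k) :
    k / (K * (2 + 3 / (2 * K) * √(r 0))) + 1 / √(r 0) ≤ 1 / √(r k) := by
  have hstep : ∀ j < k, 1 / √(r j) + 1 / (K * (2 + 3 / (2 * K) * √(r 0)))
      ≤ 1 / √(r (j + 1)) := fun j hj => by
    linarith [one_div_le_one_div_sqrt_succ_sub hr hrec (hpos.trans_le (hr hj))]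
  have htelescope := add_nsmul_le_of_forall_add_le hstep
  rw [nsmul_eq_mul] at htelescope
  linarith [mul_one_div (k : ℝ) (K * (2 + 3 / (2 * K) * √(r 0)))]

end Recursion

theorem sublinear_rate_recursion_general
    (r : ℕ → ℝ) (M : ℝ)
    (hdec : ∀ k, r (k + 1) ≤ r k)
    (hrec : ∀ k, r (k + 1) ^ ((3 : ℝ) / 2) ≤ M ^ 2 * (r k - r (k + 1))) :
    (∀ k : ℕ, 1 ≤ k → 0 < r k →
      1 / (M ^ 2 * (2 + (3 / (2 * M ^ 2)) * Real.sqrt (r 0)))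
        ≤ 1 / Real.sqrt (r k) - 1 / Real.sqrt (r (k - 1))) ∧
    (∀ k : ℕ, 1 ≤ k →
      r k ≤ 1 / ((k / (M ^ 2 * (2 + (3 / (2 * M ^ 2)) * Real.sqrt (r 0)))
        + 1 / Real.sqrt (r 0)) ^ 2)) := by
  have hr : Antitone r := antitone_nat_of_succ_le hdec
  refine ⟨fun k hk hpos => ?_, fun k hk => ?_⟩
  · obtain ⟨j, rfl⟩ : ∃ j, k = j + 1 := ⟨k - 1, by omega⟩
    exact one_div_le_one_div_sqrt_succ_sub hr hrec hpos
  · rcases le_or_gt (r k) 0 with hle | hpos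
    · exact hle.trans (by positivity)
    · have hr0 : 0 < √(r 0) := sqrt_pos.mpr (hpos.trans_le (hr k.zero_le))
      exact le_one_div_sq_of_le_one_div_sqrt hpos
        (add_pos_of_nonneg_of_pos (by positivity) (one_div_pos.mpr hr0))
        (nat_div_add_one_div_sqrt_le hr hrec hpos)

/-- If `{r_k}` is nonincreasing, nonnegative, and satisfies
`r_{k+1}^{3/2} ≤ M²(r_k − r_{k+1})`, then the per-step estimate
`1/√r_k − 1/√r_{k−1} ≥ 1/(M²(2 + (3/(2M²))√r₀))` holds whenever `r_k > 0`, and hence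
`r_k ≤ 1/((k/(M²(2 + (3/(2M²))√r₀)) + 1/√r₀)²` for all `k ≥ 1`. -/
theorem sublinear_rate_recursion
    (r : ℕ → ℝ) (M : ℝ) (hM : 0 < M)
    (hnn : ∀ k, 0 ≤ r k)
    (hdec : ∀ k, r (k + 1) ≤ r k)
    (hrec : ∀ k, r (k + 1) ^ ((3 : ℝ) / 2) ≤ M ^ 2 * (r k - r (k + 1))) :
    (∀ k : ℕ, 1 ≤ k → 0 < r k →
      1 / (M ^ 2 * (2 + (3 / (2 * M ^ 2)) * Real.sqrt (r 0)))
        ≤ 1 / Real.sqrt (r k) - 1 / Real.sqrt (r (k - 1))) ∧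
    (∀ k : ℕ, 1 ≤ k →
      r k ≤ 1 / ((k / (M ^ 2 * (2 + (3 / (2 * M ^ 2)) * Real.sqrt (r 0)))
        + 1 / Real.sqrt (r 0)) ^ 2)) :=
  sublinear_rate_recursion_general r M hdec hrec
end
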